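/- arXiv:1701.02178 — 11 statements merged into one kernel-verified Lean document; each statement's English description precedes it below -/
import Mathlib

section
/- Let A be a finite unital F∞-algebra in which every nonzero element is invertible (a finite division algebra). Then for all a, b ∈ A with a ≠ b, a + b = 0. -/
class FinfModule (M : Type*) extends Zero M, Neg M, Add M where
  add_assoc : ∀ a b c : M, a + b + c = a + (b + c)
  add_comm : ∀ a b : M, a + b = b + a
  add_idem : ∀ a : M, a + a = a
  add_neg : ∀ a : M, a + -a = 0
  neg_add : ∀ a b : M, -(a + b) = -a + -b
  neg_neg : ∀ a : M, - -a = a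

class FinfAlgebra (A : Type*) extends FinfModule A, Mul A where
  mul_assoc : ∀ a b c : A, a * b * c = a * (b * c)
  mul_zero : ∀ a : A, a * 0 = 0
  zero_mul : ∀ a : A, 0 * a = 0
  neg_mul : ∀ a b : A, -a * b = -(a * b)
  mul_neg : ∀ a b : A, a * -b = -(a * b)
  left_distrib : ∀ a b c : A, a * (b + c) = a * b + a * c
  right_distrib : ∀ a b c : A, (a + b) * c = a * c + b * c

class FinfUnitalAlgebra (A : Type*) extends FinfAlgebra A, One A where
  one_mul : ∀ a : A, 1 * a = a
  mul_one : ∀ a : A, a * 1 = a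

/-!
Order `A` by `x ≤ y ↔ x + y = y`. Left multiplication is monotone, so `y ≤ 1` forces `x * y ≤ x`.
If `a + b ≠ 0`, put `c = a + b`; then `x = c⁻¹ a` and `y = c⁻¹ b` are units with `x + y = 1`,
so `x ≤ 1` and `y ≤ 1`. Then every power `x ^ k ≤ 1`, and in a finite algebra some power
`x ^ (k + 1)` of the unit `x` is `1`, so `1 = x * x ^ k ≤ x ≤ 1`. Hence `x = y = 1` and `a = c x = c y = b`.
-/

theorem FinfModule.zero_add {M : Type*} [FinfModule M] (x : M) : 0 + x = 0 := by
  rw [← FinfModule.add_neg x, FinfModule.add_assoc, FinfModule.add_comm (-x) x,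
    ← FinfModule.add_assoc, FinfModule.add_idem, FinfModule.add_neg]

theorem FinfModule.add_add_self {M : Type*} [FinfModule M] (x y : M) : x + y + y = x + y := by
  rw [FinfModule.add_assoc, FinfModule.add_idem]

namespace FinfUnitalAlgebra

variable {A : Type*} [FinfUnitalAlgebra A]

instance toMonoid : Monoid A where
  mul_assoc := FinfAlgebra.mul_assoc
  one_mul := one_mul
  mul_one := mul_one

theorem add_mul_eq_self_of_one_add_eq (x : A) {y : A} (hy : 1 + y = 1) : x + x * y = x := by
  calc x + x * y = x * (1 + y) := by rw [FinfAlgebra.left_distrib, mul_one]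
    _ = x := by rw [hy, mul_one]

theorem one_add_pow_eq_one {z : A} (hz : 1 + z = 1) (n : ℕ) : 1 + z ^ n = 1 := by
  induction n with
  | zero => exact FinfModule.add_idem 1
  | succ n ih =>
    calc 1 + z ^ (n + 1) = 1 + (z ^ n + z ^ n * z) := by
          rw [← FinfModule.add_assoc, ih, _root_.pow_succ]
      _ = 1 := by rw [add_mul_eq_self_of_one_add_eq _ hz, ih]

theorem eq_one_of_isUnit_of_one_add_eq [Finite A] {z : A} (hunit : IsUnit z)
    (hz : 1 + z = 1) : z = 1 := by
  obtain ⟨n, hn, hpow⟩ := hunit.isOfFinOrder.exists_pow_eq_one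
  obtain ⟨k, rfl⟩ : ∃ k, n = k + 1 := ⟨n - 1, by omega⟩
  have hz_add_one : z + 1 = z := by
    rw [← hpow, _root_.pow_succ', add_mul_eq_self_of_one_add_eq z (one_add_pow_eq_one hz k)]
  rw [← hz_add_one, FinfModule.add_comm, hz]

theorem eq_one_of_add_eq_one [Finite A] {x y : A} (hx : IsUnit x) (hy : IsUnit y)
    (hxy : x + y = 1) : x = 1 ∧ y = 1 := by
  refine ⟨eq_one_of_isUnit_of_one_add_eq hx ?_, eq_one_of_isUnit_of_one_add_eq hy ?_⟩
  · rw [← hxy, FinfModule.add_comm x y, FinfModule.add_add_self]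
  · rw [← hxy, FinfModule.add_add_self]

end FinfUnitalAlgebra

theorem stmt1 {A : Type*} [FinfUnitalAlgebra A] [Finite A]
    (hdiv : ∀ a : A, a ≠ 0 → ∃ a' : A, a * a' = 1 ∧ a' * a = 1)
    (a b : A) (hab : a ≠ b) : a + b = 0 := by
  have isUnit_of_ne_zero : ∀ t : A, t ≠ 0 → IsUnit t := fun t ht ↦
    isUnit_iff_exists.mpr (hdiv t ht)
  by_contra hc
  have ha : a ≠ 0 := by rintro rfl; exact hc (FinfModule.zero_add b)
  have hb : b ≠ 0 := by rintro rfl; exact hc (by rw [FinfModule.add_comm, FinfModule.zero_add])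
  obtain ⟨c, hc_mul, hmul_c⟩ := hdiv (a + b) hc
  have hcunit : IsUnit c := isUnit_iff_exists.mpr ⟨a + b, hmul_c, hc_mul⟩
  have hsum : c * a + c * b = 1 := by rw [← FinfAlgebra.left_distrib, hmul_c]
  obtain ⟨hca, hcb⟩ := FinfUnitalAlgebra.eq_one_of_add_eq_one
    (hcunit.mul (isUnit_of_ne_zero a ha)) (hcunit.mul (isUnit_of_ne_zero b hb)) hsum
  exact hab (hcunit.mul_left_cancel (hca.trans hcb.symm))
end

section
/- Let M be an F∞-module and suppose there is a finite subset G ⊆ M such that every element of M equals the sum Σ_{x∈S} x over some nonempty subset S ⊆ G (M is finitely generated). Then for all a, b ∈ M, if the set of common upper bounds {x ∈ M : a ≤ x and b ≤ x} is nonempty, it has a least element. (That is, the order closure of M is a lattice.) -/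
def nsum {M : Type*} [FinfModule M] : List M → M
  | [] => 0
  | [a] => a
  | a :: b :: l => a + nsum (b :: l)

theorem exists_isLeast_upperBounds_of_finite {α : Type*} [SemilatticeInf α] {s : Set α}
    (hfin : (upperBounds s).Finite) (hne : (upperBounds s).Nonempty) :
    ∃ c, IsLeast (upperBounds s) c := by
  have hne' : hfin.toFinset.Nonempty := hfin.toFinset_nonempty.mpr hne
  have hglb : IsGLB (upperBounds s) (hfin.toFinset.inf' hne' id) := by
    simpa using Finset.isGLB_inf' hne'
  exact ⟨_, fun a ha => hglb.2 (subset_lowerBounds_upperBounds s ha), hglb.1⟩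

namespace FinfModule

abbrev toSemilatticeInf (M : Type*) [FinfModule M] : SemilatticeInf M :=
  @SemilatticeInf.mk' M ⟨(· + ·)⟩ add_comm add_assoc add_idem

attribute [local instance] toSemilatticeInf

variable {M : Type*} [FinfModule M]

theorem le_iff_add_eq {a b : M} : a ≤ b ↔ a + b = a := by
  change b + a = a ↔ a + b = a
  rw [add_comm]

theorem finite_of_generated (G : Finset M) (hgen : ∀ m : M, ∃ S ⊆ G, nsum S.toList = m) :
    Finite M :=
  Finite.of_surjective (fun S : G.powerset => nsum (S : Finset M).toList) fun m => by
    obtain ⟨S, hSG, rfl⟩ := hgen m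
    exact ⟨⟨S, Finset.mem_powerset.mpr hSG⟩, rfl⟩

end FinfModule

attribute [local instance] FinfModule.toSemilatticeInf

theorem stmt2 {M : Type*} [FinfModule M] (G : Finset M)
    (hgen : ∀ m : M, ∃ S : Finset M, S.Nonempty ∧ S ⊆ G ∧ nsum S.toList = m)
    (a b : M) (hne : ∃ x : M, a + x = a ∧ b + x = b) :
    ∃ c : M, (a + c = a ∧ b + c = b) ∧
      ∀ x : M, a + x = a → b + x = b → c + x = c := by
  have : Finite M := FinfModule.finite_of_generated G fun m =>
    (hgen m).imp fun _ hS => hS.2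
  have hub : ∀ x : M, x ∈ upperBounds {a, b} ↔ a + x = a ∧ b + x = b := by
    simp [upperBounds_insert, FinfModule.le_iff_add_eq]
  obtain ⟨x, hx⟩ := hne
  obtain ⟨c, hc, hleast⟩ :=
    exists_isLeast_upperBounds_of_finite (Set.toFinite _) ⟨x, (hub x).mpr hx⟩
  exact ⟨c, (hub c).mp hc, fun y ha hb =>
    FinfModule.le_iff_add_eq.mp (hleast ((hub y).mpr ⟨ha, hb⟩))⟩
end

section
/- Let M be an F∞-module and I an ideal of M. Then there exists a congruence C on M whose kernel is I and which contains every congruence on M whose kernel is I; that is, among all congruences with kernel I there is a greatest one. -/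
structure FinfModCong (M : Type*) [FinfModule M] where
  rel : M → M → Prop
  refl : ∀ a : M, rel a a
  symm : ∀ {a b : M}, rel a b → rel b a
  trans : ∀ {a b c : M}, rel a b → rel b c → rel a c
  add_compat : ∀ {a b : M} (c : M), rel a b → rel (a + c) (b + c)
  neg_compat : ∀ {a b : M}, rel a b → rel (-a) (-b)

section

variable {M : Type*} [FinfModule M]

/-- `0` is absorbing rather than neutral, so the untranslated case is not among the translates. -/
def AddIndist (I : Set M) (a b : M) : Prop :=
  (a ∈ I ↔ b ∈ I) ∧ ∀ c : M, a + c ∈ I ↔ b + c ∈ I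

namespace AddIndist

variable {I : Set M} {a b c : M}

theorem refl (a : M) : AddIndist I a a :=
  ⟨Iff.rfl, fun _ => Iff.rfl⟩

theorem symm (h : AddIndist I a b) : AddIndist I b a :=
  ⟨h.1.symm, fun c => (h.2 c).symm⟩

theorem trans (h : AddIndist I a b) (h' : AddIndist I b c) : AddIndist I a c :=
  ⟨h.1.trans h'.1, fun d => (h.2 d).trans (h'.2 d)⟩

theorem add_right (h : AddIndist I a b) (c : M) : AddIndist I (a + c) (b + c) := by
  refine ⟨h.2 c, fun d => ?_⟩
  rw [FinfModule.add_assoc, FinfModule.add_assoc]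
  exact h.2 (c + d)

end AddIndist

def FinfModCong.syntactic (I : Set M) : FinfModCong M where
  rel a b := AddIndist I a b ∧ AddIndist I (-a) (-b)
  refl a := ⟨.refl a, .refl (-a)⟩
  symm h := ⟨h.1.symm, h.2.symm⟩
  trans h h' := ⟨h.1.trans h'.1, h.2.trans h'.2⟩
  add_compat c h := by
    refine ⟨h.1.add_right c, ?_⟩
    rw [FinfModule.neg_add, FinfModule.neg_add]
    exact h.2.add_right (-c)
  neg_compat h := by
    rw [FinfModule.neg_neg, FinfModule.neg_neg]
    exact ⟨h.2, h.1⟩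

namespace FinfModCong

variable {I : Set M}

theorem mem_iff_of_rel_of_kernel (D : FinfModCong M) (hD : ∀ a : M, D.rel a 0 ↔ a ∈ I)
    {a b : M} (hab : D.rel a b) : a ∈ I ↔ b ∈ I :=
  ⟨fun ha => (hD b).1 (D.trans (D.symm hab) ((hD a).2 ha)),
    fun hb => (hD a).1 (D.trans hab ((hD b).2 hb))⟩

theorem rel_syntactic_of_saturates (D : FinfModCong M)
    (hD : ∀ a b : M, D.rel a b → (a ∈ I ↔ b ∈ I)) {a b : M} (hab : D.rel a b) :
    (syntactic I).rel a b :=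
  have indist : ∀ {x y : M}, D.rel x y → AddIndist I x y := fun hxy =>
    ⟨hD _ _ hxy, fun c => hD _ _ (D.add_compat c hxy)⟩
  ⟨indist hab, indist (D.neg_compat hab)⟩

theorem syntactic_rel_zero_iff (h0 : (0 : M) ∈ I) (hneg : ∀ a ∈ I, -a ∈ I)
    (hadd : ∀ a ∈ I, ∀ m : M, a + m ∈ I) (a : M) : (syntactic I).rel a 0 ↔ a ∈ I := by
  refine ⟨fun h => h.1.1.2 h0, fun ha => ?_⟩
  have indist_of_mem : ∀ {x y : M}, x ∈ I → y ∈ I → AddIndist I x y := fun hx hy =>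
    ⟨iff_of_true hx hy, fun c => iff_of_true (hadd _ hx c) (hadd _ hy c)⟩
  exact ⟨indist_of_mem ha h0, indist_of_mem (hneg a ha) (hneg 0 h0)⟩

end FinfModCong

end

theorem stmt4 {M : Type*} [FinfModule M] (I : Set M)
    (h0 : (0 : M) ∈ I) (hneg : ∀ a ∈ I, -a ∈ I)
    (hadd : ∀ a ∈ I, ∀ m : M, a + m ∈ I) :
    ∃ C : FinfModCong M, (∀ a : M, C.rel a 0 ↔ a ∈ I) ∧
      ∀ D : FinfModCong M, (∀ a : M, D.rel a 0 ↔ a ∈ I) →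
        ∀ a b : M, D.rel a b → C.rel a b :=
  ⟨FinfModCong.syntactic I, FinfModCong.syntactic_rel_zero_iff h0 hneg hadd,
    fun D hD _ _ => D.rel_syntactic_of_saturates fun _ _ => D.mem_iff_of_rel_of_kernel hD⟩
end

section
/- Let F be an F∞-field and define C = {(a,b) ∈ F × F : a ≠ 0, b ≠ 0, and a + b ≠ 0} ∪ {(0,0)}. Then C is a congruence on F, and moreover every proper congruence on F is contained in C (so C is the unique maximal proper congruence on F). -/
class FinfCommAlgebra (A : Type*) extends FinfUnitalAlgebra A where
  mul_comm : ∀ a b : A, a * b = b * a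

structure FinfCong (A : Type*) [FinfAlgebra A] extends FinfModCong A where
  mul_compat : ∀ {a b : A} (c : A), rel a b → rel (a * c) (b * c)
/-!
`C` is the kernel of `a ↦ {c | a + c = 0}`, so it is an equivalence compatible with `+` and `-`
for free, and with multiplication by `d ≠ 0` because `a * d + c = (a + c * d⁻¹) * d`.
Its description in the statement rests on the identity `(a + b) * (b + c) = 0` whenever
`a + c = 0`: in a field, `a + b ≠ 0` and `b + c ≠ 0` then force `a + c ≠ 0`.
A proper congruence relates `0` only to `0` (otherwise multiplying by inverses relates `0` to
everything), so adding `c` to a related pair `a, b` shows `a + c = 0 ↔ b + c = 0`.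
-/

namespace FinfModule

variable {M : Type*} [FinfModule M]

theorem zero_add_eq_zero (x : M) : 0 + x = 0 := by
  rw [← add_neg x, add_comm x, add_assoc, add_idem, add_comm]

theorem add_zero_eq_zero (x : M) : x + 0 = 0 := by
  rw [add_comm, zero_add_eq_zero]

theorem neg_zero : -(0 : M) = 0 := by
  rw [← add_neg (0 : M), neg_add, neg_neg, add_comm]

theorem neg_eq_zero_iff {a : M} : -a = 0 ↔ a = 0 :=
  ⟨fun h => by rw [← neg_neg a, h, neg_zero], fun h => by rw [h, neg_zero]⟩

theorem neg_add_eq_zero_iff {a c : M} : -a + c = 0 ↔ a + -c = 0 := by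
  rw [← neg_eq_zero_iff, neg_add, neg_neg]

variable (M) in
def zeroSumCong : FinfModCong M where
  rel a b := ∀ c, a + c = 0 ↔ b + c = 0
  refl _ _ := Iff.rfl
  symm h c := (h c).symm
  trans h h' c := (h c).trans (h' c)
  add_compat d h c := by simpa only [add_assoc] using h (d + c)
  neg_compat h c := by simpa only [neg_add_eq_zero_iff] using h (-c)

end FinfModule

def IsFinfField (F : Type*) [FinfCommAlgebra F] : Prop :=
  ∀ a : F, a ≠ 0 → ∃ b : F, a * b = 1

namespace FinfCommAlgebra

variable {F : Type*} [FinfCommAlgebra F]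

theorem add_mul_add_eq_zero {a b c : F} (h : a + c = 0) : (a + b) * (b + c) = 0 := by
  have hsum : (a + b) + (b + c) = 0 := by
    rw [FinfModule.add_assoc, ← FinfModule.add_assoc b, FinfModule.add_idem,
      FinfModule.add_comm b, ← FinfModule.add_assoc, h, FinfModule.zero_add_eq_zero]
  have hv : b + (b + c) = b + c := by rw [← FinfModule.add_assoc, FinfModule.add_idem]
  -- Expand `(b + c) * (a + b)` once as `a * (b + c) + b * (b + c)` and once, via `hv`,
  -- as `b * (a + b) + (b + c) * (a + b)`.
  calc (a + b) * (b + c) = b * (a + b) + (b + c) * (a + b) := by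
        rw [← FinfAlgebra.right_distrib, hv, mul_comm]
    _ = a * (b + c) + b * ((a + b) + (b + c)) := by
        rw [mul_comm (b + c), FinfAlgebra.right_distrib a b, FinfAlgebra.left_distrib b (a + b),
          ← FinfModule.add_assoc, FinfModule.add_comm (b * (a + b)), FinfModule.add_assoc]
    _ = 0 := by rw [hsum, FinfAlgebra.mul_zero, FinfModule.add_zero_eq_zero]

theorem mul_eq_zero_iff_of_mul_eq_one {d d' : F} (hd : d * d' = 1) {x : F} :
    x * d = 0 ↔ x = 0 :=
  ⟨fun h => by
    rw [← FinfUnitalAlgebra.mul_one x, ← hd, ← FinfAlgebra.mul_assoc, h, FinfAlgebra.zero_mul],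
    fun h => by rw [h, FinfAlgebra.zero_mul]⟩

theorem mul_add_eq_zero_iff_of_mul_eq_one {d d' : F} (hd : d * d' = 1) {a c : F} :
    a * d + c = 0 ↔ a + c * d' = 0 := by
  have : (a + c * d') * d = a * d + c := by
    rw [FinfAlgebra.right_distrib, FinfAlgebra.mul_assoc, mul_comm d', hd,
      FinfUnitalAlgebra.mul_one]
  rw [← this, mul_eq_zero_iff_of_mul_eq_one hd]

theorem add_eq_zero_or (hF : IsFinfField F) {a c : F} (h : a + c = 0) (b : F) :
    a + b = 0 ∨ b + c = 0 := by
  refine or_iff_not_imp_right.2 fun hbc => ?_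
  obtain ⟨v, hv⟩ := hF _ hbc
  exact (mul_eq_zero_iff_of_mul_eq_one hv).1 (add_mul_add_eq_zero h)

theorem zeroSumCong_rel_iff (hF : IsFinfField F) {a b : F} :
    (FinfModule.zeroSumCong F).rel a b ↔ (a ≠ 0 ∧ b ≠ 0 ∧ a + b ≠ 0) ∨ (a = 0 ∧ b = 0) := by
  constructor
  · intro h
    have hba : a = 0 ↔ b + a = 0 := by simpa only [FinfModule.add_idem] using h a
    have hab : a + b = 0 ↔ b = 0 := by simpa only [FinfModule.add_idem] using h b
    rw [FinfModule.add_comm] at hba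
    by_cases ha : a = 0
    · exact Or.inr ⟨ha, hab.1 (hba.1 ha)⟩
    · exact Or.inl ⟨ha, fun hb => ha (hba.2 (hab.2 hb)), fun hs => ha (hba.2 hs)⟩
  · rintro (⟨-, -, hab⟩ | ⟨rfl, rfl⟩) c
    · refine ⟨fun hac => (add_eq_zero_or hF hac b).resolve_left hab, fun hbc => ?_⟩
      rw [FinfModule.add_comm] at hab
      exact (add_eq_zero_or hF hbc a).resolve_left hab
    · exact Iff.rfl

def zeroSumCong (hF : IsFinfField F) : FinfCong F where
  toFinfModCong := FinfModule.zeroSumCong F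
  mul_compat d h c := by
    by_cases hd : d = 0
    · subst hd
      simp only [FinfAlgebra.mul_zero]
    · obtain ⟨d', hd'⟩ := hF d hd
      simp only [mul_add_eq_zero_iff_of_mul_eq_one hd']
      exact h _

end FinfCommAlgebra

namespace FinfCong

variable {F : Type*} [FinfCommAlgebra F]

theorem eq_zero_of_rel_zero (hF : IsFinfField F) {D : FinfCong F} (hD : ∃ x y : F, ¬ D.rel x y)
    {z : F} (h : D.rel 0 z) : z = 0 := by
  by_contra hz
  obtain ⟨z', hz'⟩ := hF z hz
  have rel_zero : ∀ w, D.rel 0 w := fun w => by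
    simpa only [FinfAlgebra.zero_mul, ← FinfAlgebra.mul_assoc, hz', FinfUnitalAlgebra.one_mul]
      using D.mul_compat (z' * w) h
  obtain ⟨x, y, hxy⟩ := hD
  exact hxy (D.trans (D.symm (rel_zero x)) (rel_zero y))

theorem add_eq_zero_iff_of_rel (hF : IsFinfField F) {D : FinfCong F}
    (hD : ∃ x y : F, ¬ D.rel x y) {a b : F} (h : D.rel a b) (c : F) :
    a + c = 0 ↔ b + c = 0 := by
  have hc := D.add_compat c h
  exact ⟨fun hac => eq_zero_of_rel_zero hF hD (hac ▸ hc),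
    fun hbc => eq_zero_of_rel_zero hF hD (D.symm (hbc ▸ hc))⟩

end FinfCong

theorem stmt7 {F : Type*} [FinfCommAlgebra F]
    (hF : ∀ a : F, a ≠ 0 → ∃ b : F, a * b = 1) :
    ∃ C : FinfCong F,
      (∀ a b : F, C.rel a b ↔ ((a ≠ 0 ∧ b ≠ 0 ∧ a + b ≠ 0) ∨ (a = 0 ∧ b = 0))) ∧
      ∀ D : FinfCong F, (∃ x y : F, ¬ D.rel x y) →
        ∀ a b : F, D.rel a b → C.rel a b :=
  ⟨FinfCommAlgebra.zeroSumCong hF, fun _ _ => FinfCommAlgebra.zeroSumCong_rel_iff hF,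
    fun _ hD _ _ h => FinfCong.add_eq_zero_iff_of_rel hF hD h⟩
end

section
/- Let A be a unital commutative F∞-algebra and C a prime congruence on A. Then for every a, b ∈ A, at least one of the following holds: (a+b, a) ∈ C, or (a+b, b) ∈ C, or (a+b, 0) ∈ C. (In other words, in A/C any two elements a, b satisfy a ≥ b, a ≤ b, or a + b = 0.) -/
def FinfProper {A : Type*} [FinfAlgebra A] (C : FinfCong A) : Prop :=
  ∃ a b : A, ¬ C.rel a b

def FinfPrime {A : Type*} [FinfAlgebra A] (C : FinfCong A) : Prop :=
  FinfProper C ∧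
  (∀ a b c d : A, C.rel (a * c + b * d) (a * d + b * c) →
      C.rel a b ∨ C.rel c d ∨ C.rel (a * c + b * d) 0 ∨ C.rel (a * d + b * c) 0) ∧
  (∀ a b c : A, C.rel (a * c) (b * c) → C.rel a b ∨ C.rel c 0)


/-! Apply the first primality condition to `(a + b, a)` and `(a + b, b)`: in a commutative
F∞-algebra both cross sums `(a + b)² + a b` and `(a + b) b + a (a + b)` equal `(a + b)²`,
so the hypothesis of the condition holds by reflexivity. Its four alternatives give
`a + b ≡ a`, `a + b ≡ b`, or `(a + b)² ≡ 0`, and the second primality condition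
(no nilpotents modulo `C`) turns the last into `a + b ≡ 0`. -/

namespace FinfModule

variable {M : Type*} [FinfModule M]

instance : Std.Associative (α := M) (· + ·) := ⟨add_assoc⟩

instance : Std.Commutative (α := M) (· + ·) := ⟨add_comm⟩

end FinfModule

namespace FinfCommAlgebra

variable {A : Type*} [FinfCommAlgebra A]

theorem add_mul_self (a b : A) : (a + b) * (a + b) = a * a + a * b + b * b := by
  simp only [FinfAlgebra.left_distrib, FinfAlgebra.right_distrib, mul_comm b a]
  calc _ = a * a + (a * b + a * b) + b * b := by ac_rfl
    _ = _ := by rw [FinfModule.add_idem]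

theorem add_mul_self_add_mul (a b : A) : (a + b) * (a + b) + a * b = (a + b) * (a + b) := by
  rw [add_mul_self]
  calc _ = a * a + (a * b + a * b) + b * b := by ac_rfl
    _ = _ := by rw [FinfModule.add_idem]

theorem add_mul_right_add_mul_add (a b : A) :
    (a + b) * b + a * (a + b) = (a + b) * (a + b) := by
  rw [add_mul_self]
  simp only [FinfAlgebra.left_distrib, FinfAlgebra.right_distrib]
  calc _ = a * a + (a * b + a * b) + b * b := by ac_rfl
    _ = _ := by rw [FinfModule.add_idem]

end FinfCommAlgebra

theorem FinfPrime.rel_zero_of_mul_self_rel_zero {A : Type*} [FinfAlgebra A] {C : FinfCong A}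
    (hC : FinfPrime C) {x : A} (h : C.rel (x * x) 0) : C.rel x 0 := by
  rw [← FinfAlgebra.zero_mul x] at h
  exact (hC.2.2 x 0 x h).elim id id

theorem stmt9 {A : Type*} [FinfCommAlgebra A] (C : FinfCong A) (hC : FinfPrime C)
    (a b : A) : C.rel (a + b) a ∨ C.rel (a + b) b ∨ C.rel (a + b) 0 := by
  have cross : C.rel ((a + b) * (a + b) + a * b) ((a + b) * b + a * (a + b)) := by
    rw [FinfCommAlgebra.add_mul_self_add_mul, FinfCommAlgebra.add_mul_right_add_mul_add]
    exact C.refl _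
  rcases hC.2.1 (a + b) a (a + b) b cross with h | h | h | h
  · exact .inl h
  · exact .inr (.inl h)
  · rw [FinfCommAlgebra.add_mul_self_add_mul] at h
    exact .inr (.inr (hC.rel_zero_of_mul_self_rel_zero h))
  · rw [FinfCommAlgebra.add_mul_right_add_mul_add] at h
    exact .inr (.inr (hC.rel_zero_of_mul_self_rel_zero h))
end

section
/- Let A be a unital commutative F∞-algebra, C a prime congruence on A, and a, b, c, d ∈ A such that a > b and c > d in A/C, i.e. (a+b, b) ∈ C with (a,b) ∉ C, and (c+d, d) ∈ C with (c,d) ∉ C. Then either ac > bd in A/C (i.e. (ac+bd, bd) ∈ C and (ac, bd) ∉ C), or (ac, 0) ∈ C. -/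
/-! In `A/C` multiplication is monotone, so `b ≤ a` and `d ≤ c` give `bd ≤ ad ≤ ac` and
`bd ≤ bc ≤ ac`. If moreover `ac = bd`, both `ad` and `bc` are squeezed to `ac`, hence
`ac + bd = ac = ad + bc` in `A/C`; the first primality condition then forces `a = b`, `c = d`
or `ac = 0`, and only the last is possible. -/

namespace FinfModCong

variable {M : Type*} [FinfModule M] (C : FinfModCong M)

/-- The natural order of `M/C`, in which `x ≤ y` iff `x + y = x`; the summands are written as
`y + x` so that `C.rel (a + b) b` is literally `C.Le b a`. -/
def Le (x y : M) : Prop := C.rel (y + x) x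

variable {C}

theorem add_compat_left {x y : M} (z : M) (h : C.rel x y) : C.rel (z + x) (z + y) := by
  simpa only [FinfModule.add_comm z] using C.add_compat z h

theorem rel_add_of_rel {x y z : M} (hx : C.rel x z) (hy : C.rel y z) : C.rel (x + y) z := by
  have h := C.trans (C.add_compat y hx) (C.add_compat_left z hy)
  rwa [FinfModule.add_idem] at h

namespace Le

theorem trans {x y z : M} (hxy : C.Le x y) (hyz : C.Le y z) : C.Le x z := by
  have hzyx : C.rel (z + (y + x)) (y + x) := by
    rw [← FinfModule.add_assoc]
    exact C.add_compat x hyz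
  exact C.trans (C.add_compat_left z (C.symm hxy)) (C.trans hzyx hxy)

theorem antisymm {x y : M} (hxy : C.Le x y) (hyx : C.Le y x) : C.rel x y := by
  unfold Le at hyx
  rw [FinfModule.add_comm] at hyx
  exact C.trans (C.symm hxy) hyx

theorem of_rel_left {x x' y : M} (hx : C.rel x x') (h : C.Le x y) : C.Le x' y :=
  C.trans (C.add_compat_left y (C.symm hx)) (C.trans h hx)

theorem rel_of_le_of_rel {x y z : M} (hxy : C.Le x y) (hyz : C.Le y z) (hxz : C.rel x z) :
    C.rel y z :=
  hyz.antisymm (hxy.of_rel_left hxz)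

theorem mul_right {A : Type*} [FinfAlgebra A] {C : FinfCong A} {x y : A}
    (h : C.Le x y) (z : A) : C.Le (x * z) (y * z) := by
  have h := C.mul_compat z h
  rwa [FinfAlgebra.right_distrib] at h

theorem mul_left {A : Type*} [FinfCommAlgebra A] {C : FinfCong A} {x y : A}
    (h : C.Le x y) (z : A) : C.Le (z * x) (z * y) := by
  simpa only [FinfCommAlgebra.mul_comm z] using h.mul_right z

end Le

end FinfModCong

theorem stmt10 {A : Type*} [FinfCommAlgebra A] (C : FinfCong A) (hC : FinfPrime C)
    (a b c d : A)
    (hab : C.rel (a + b) b) (hab' : ¬ C.rel a b)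
    (hcd : C.rel (c + d) d) (hcd' : ¬ C.rel c d) :
    (C.rel (a * c + b * d) (b * d) ∧ ¬ C.rel (a * c) (b * d)) ∨
      C.rel (a * c) 0 := by
  have hba : C.Le b a := hab
  have hdc : C.Le d c := hcd
  have hbd_ad := hba.mul_right d
  have had_ac := hdc.mul_left a
  have hbd_bc := hdc.mul_left b
  have hbc_ac := hba.mul_right c
  by_cases h0 : C.rel (a * c) 0
  · exact Or.inr h0
  refine Or.inl ⟨hbd_ad.trans had_ac, fun hac_bd => h0 ?_⟩
  have hbd := C.symm hac_bd
  have hl : C.rel (a * c + b * d) (a * c) := C.rel_add_of_rel (C.refl _) hbd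
  have hr : C.rel (a * d + b * c) (a * c) :=
    C.rel_add_of_rel (hbd_ad.rel_of_le_of_rel had_ac hbd) (hbd_bc.rel_of_le_of_rel hbc_ac hbd)
  obtain h | h | h | h := hC.2.1 a b c d (C.trans hl (C.symm hr))
  · exact absurd h hab'
  · exact absurd h hcd'
  · exact C.trans (C.symm hl) h
  · exact C.trans (C.symm hr) h
end

section
/- Let A be a unital commutative F∞-algebra, C a prime congruence on A, and n ≥ 1 an integer. If (aⁿ, bⁿ) ∈ C for some a, b ∈ A with (a, b) ∉ C, then (a + b, 0) ∈ C. -/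
def apow {A : Type*} [FinfAlgebra A] (a : A) : ℕ → A
  | 0 => a
  | 1 => a
  | n + 2 => a * apow a (n + 1)

/-!
Because addition is idempotent, `Tₖ = ∑_{i ≤ k} aⁱ bᵏ⁻ⁱ` satisfies `(a + b) Tₖ = Tₖ₊₁`: the mixed
terms produced by `a Tₖ` and `b Tₖ` coincide and merge. Moreover `a Tₖ₊₁` and `b Tₖ₊₁` differ only
in the summand `aᵏ⁺²` versus `bᵏ⁺²`, so `(aⁿ, bⁿ) ∈ C` gives `(a Tₙ₋₁, b Tₙ₋₁) ∈ C`, and cancellation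
with `(a, b) ∉ C` yields `(Tₙ₋₁, 0) ∈ C`. Cancelling `Tₖ = (a + b) Tₖ₋₁` repeatedly then brings us
either to `(a + b, 0) ∈ C` or down to `(T₀, 0) = (1, 0) ∈ C`, which again gives `(a + b, 0) ∈ C`.
-/

namespace FinfCommAlgebra

variable {A : Type*} [FinfCommAlgebra A]

lemma mul_left_comm (a b c : A) : a * (b * c) = b * (a * c) := by
  rw [← FinfAlgebra.mul_assoc, mul_comm a b, FinfAlgebra.mul_assoc]

end FinfCommAlgebra

section GeomSum

variable {A : Type*} [FinfCommAlgebra A]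

lemma apow_add_two (a : A) (k : ℕ) : apow a (k + 2) = a * apow a (k + 1) := rfl

/-- `geomSum a b k = ∑_{i=0}^{k} aⁱ bᵏ⁻ⁱ`. -/
def geomSum (a b : A) : ℕ → A
  | 0 => 1
  | k + 1 => a * geomSum a b k + apow b (k + 1)

lemma mul_geomSum_succ_right (a b : A) (k : ℕ) :
    b * geomSum a b (k + 1) = a * (b * geomSum a b k) + apow b (k + 2) := by
  rw [geomSum, FinfAlgebra.left_distrib, FinfCommAlgebra.mul_left_comm, apow_add_two]

lemma geomSum_succ_eq_apow_add (a b : A) :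
    ∀ k : ℕ, geomSum a b (k + 1) = apow a (k + 1) + b * geomSum a b k
  | 0 => by
    show a * 1 + b = a + b * 1
    rw [FinfUnitalAlgebra.mul_one, FinfUnitalAlgebra.mul_one]
  | k + 1 => by
    rw [mul_geomSum_succ_right, geomSum, geomSum_succ_eq_apow_add a b k,
      FinfAlgebra.left_distrib, apow_add_two, FinfModule.add_assoc]
    rfl

lemma mul_geomSum_succ_left (a b : A) (k : ℕ) :
    a * geomSum a b (k + 1) = apow a (k + 2) + a * (b * geomSum a b k) := by
  rw [geomSum_succ_eq_apow_add, FinfAlgebra.left_distrib, apow_add_two]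

lemma add_mul_geomSum (a b : A) : ∀ k : ℕ, (a + b) * geomSum a b k = geomSum a b (k + 1)
  | 0 => by
    show (a + b) * 1 = a * 1 + b
    rw [FinfUnitalAlgebra.mul_one, FinfUnitalAlgebra.mul_one]
  | k + 1 => by
    set m := a * (b * geomSum a b k)
    calc (a + b) * geomSum a b (k + 1)
        = apow a (k + 2) + m + (m + apow b (k + 2)) := by
          rw [FinfAlgebra.right_distrib, mul_geomSum_succ_left, mul_geomSum_succ_right]
      _ = apow a (k + 2) + (m + apow b (k + 2)) := by
          rw [FinfModule.add_assoc, ← FinfModule.add_assoc m m, FinfModule.add_idem]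
      _ = geomSum a b (k + 2) := by
          rw [← mul_geomSum_succ_right, geomSum_succ_eq_apow_add a b (k + 1)]

lemma rel_mul_geomSum_of_rel_apow (C : FinfCong A) (a b : A) (k : ℕ)
    (h : C.rel (apow a (k + 2)) (apow b (k + 2))) :
    C.rel (a * geomSum a b (k + 1)) (b * geomSum a b (k + 1)) := by
  rw [mul_geomSum_succ_left, mul_geomSum_succ_right,
    FinfModule.add_comm (a * (b * geomSum a b k))]
  exact C.add_compat _ h

lemma rel_add_zero_of_geomSum_rel_zero (C : FinfCong A)
    (hcancel : ∀ x y z : A, C.rel (x * z) (y * z) → C.rel x y ∨ C.rel z 0) (a b : A) :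
    ∀ k : ℕ, C.rel (geomSum a b k) 0 → C.rel (a + b) 0
  | 0, h => by
    have h' := C.mul_compat (a + b) h
    rwa [geomSum, FinfUnitalAlgebra.one_mul, FinfAlgebra.zero_mul] at h'
  | k + 1, h => by
    rw [← add_mul_geomSum, ← FinfAlgebra.zero_mul (geomSum a b k)] at h
    exact (hcancel _ _ _ h).elim id (rel_add_zero_of_geomSum_rel_zero C hcancel a b k)

end GeomSum

theorem stmt11_general {A : Type*} [FinfCommAlgebra A] (C : FinfCong A) (hC : FinfPrime C)
    (a b : A) (n : ℕ) (h : C.rel (apow a n) (apow b n))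
    (hab : ¬ C.rel a b) : C.rel (a + b) 0 := by
  match n, h with
  | 0, h | 1, h => exact absurd h hab
  | k + 2, h =>
    obtain hab' | hT := hC.2.2 a b _ (rel_mul_geomSum_of_rel_apow C a b k h)
    · exact absurd hab' hab
    · exact rel_add_zero_of_geomSum_rel_zero C hC.2.2 a b (k + 1) hT

theorem stmt11 {A : Type*} [FinfCommAlgebra A] (C : FinfCong A) (hC : FinfPrime C)
    (a b : A) (n : ℕ) (hn : 1 ≤ n) (h : C.rel (apow a n) (apow b n))
    (hab : ¬ C.rel a b) : C.rel (a + b) 0 :=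
  stmt11_general C hC a b n h hab
end

section
/- Let A be a commutative F∞-algebra and C a cancellative congruence on A. Then C is radical: whenever (a² + b², ab) ∈ C, then (a, b) ∈ C or (a² + b², 0) ∈ C or (ab, 0) ∈ C. -/
def FinfCancellative {A : Type*} [FinfAlgebra A] (C : FinfCong A) : Prop :=
  ∀ a b c : A, C.rel (a * b) (a * c) → C.rel a 0 ∨ C.rel b c

/-! Idempotency of addition gives (a² + b²) + a² = a² + b², so adding a² (resp. b²) to
a² + b² ~ ab yields a² + b² ~ (a + b)a and a² + b² ~ (a + b)b. Cancelling a + b leaves a ~ b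
or a + b ~ 0; in the latter case a² + b² ~ ab + (a² + b²) = (a + b)² ~ 0. -/

namespace FinfModule

variable {M : Type*} [FinfModule M]

instance : Std.IdempotentOp (α := M) (· + ·) := ⟨add_idem⟩

end FinfModule

namespace FinfAlgebra

variable {A : Type*} [FinfAlgebra A]

theorem add_mul_left_eq_of_comm (hcomm : ∀ a b : A, a * b = b * a) (a b : A) :
    (a + b) * a = a * b + a * a := by
  rw [right_distrib, hcomm b a]
  ac_rfl

theorem add_mul_self_eq_of_comm (hcomm : ∀ a b : A, a * b = b * a) (a b : A) :
    (a + b) * (a + b) = a * b + (a * a + b * b) := by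
  rw [right_distrib, left_distrib, left_distrib, hcomm b a]
  ac_rfl

end FinfAlgebra

namespace FinfModCong

variable {M : Type*} [FinfModule M] (C : FinfModCong M)

theorem rel_add_of_add_eq {x y z : M} (h : C.rel x y) (hz : x + z = x) : C.rel x (y + z) := by
  simpa only [hz] using C.add_compat z h

end FinfModCong

namespace FinfCong

variable {A : Type*} [FinfAlgebra A] (C : FinfCong A)

theorem mul_rel_zero {x : A} (y : A) (h : C.rel x 0) : C.rel (x * y) 0 := by
  simpa only [FinfAlgebra.zero_mul] using C.mul_compat y h

end FinfCong

theorem stmt13 {A : Type*} [FinfAlgebra A] (hcomm : ∀ a b : A, a * b = b * a)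
    (C : FinfCong A) (hC : FinfCancellative C) :
    ∀ a b : A, C.rel (a * a + b * b) (a * b) →
      C.rel a b ∨ C.rel (a * a + b * b) 0 ∨ C.rel (a * b) 0 := by
  intro a b h
  have ha : C.rel (a * a + b * b) ((a + b) * a) :=
    (FinfAlgebra.add_mul_left_eq_of_comm hcomm a b).symm ▸ C.rel_add_of_add_eq h (by ac_rfl)
  have hb : C.rel (a * a + b * b) ((a + b) * b) :=
    (FinfAlgebra.right_distrib a b b).symm ▸ C.rel_add_of_add_eq h (by ac_rfl)
  rcases hC (a + b) a b (C.trans (C.symm ha) hb) with hsum | hab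
  · have hsq : C.rel ((a + b) * (a + b)) 0 := C.mul_rel_zero (a + b) hsum
    rw [FinfAlgebra.add_mul_self_eq_of_comm hcomm] at hsq
    exact Or.inr (Or.inl (C.trans (C.rel_add_of_add_eq h (FinfModule.add_idem _)) hsq))
  · exact Or.inl hab
end

section
/- Let A be a commutative F∞-algebra, C a cancellative congruence on A, and a, b, c, d ∈ A such that (ac + bd, ad + bc) ∈ C, (a + b, 0) ∉ C, and (c + d, 0) ∉ C. Then for every integer n ≥ 1, (aⁿc + bⁿd, aⁿd + bⁿc) ∈ C. -/
/-! Call `(x, y)` cross-related to `(c, d)` when `(x c + y d, x d + y c) ∈ C`. This is preserved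
under multiplying `x` and `y` by a common factor, and it is transitive along `x, y, z` as soon as
`(x + y, 0) ∉ C`: the hypotheses link `(x + y)(x c + z d)` to `(x + y)(x d + z c)` in four steps,
and cancellativity removes the factor `x + y`. Inductively, `(aⁿ⁺¹, b aⁿ)` is cross-related to
`(c, d)` (the hypothesis times `aⁿ`), so is `(b aⁿ, bⁿ⁺¹)` (the induction hypothesis times `b`),
and `aⁿ⁺¹ + b aⁿ = (a + b) aⁿ` is not congruent to `0` because `C` is cancellative. -/

theorem apow_succ {A : Type*} [FinfAlgebra A] (a : A) {n : ℕ} (hn : n ≠ 0) :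
    apow a (n + 1) = a * apow a n := by
  obtain ⟨k, rfl⟩ := Nat.exists_eq_succ_of_ne_zero hn
  rfl

instance {M : Type*} [FinfModule M] : Std.Associative (α := M) (· + ·) := ⟨FinfModule.add_assoc⟩

instance {M : Type*} [FinfModule M] : Std.Commutative (α := M) (· + ·) := ⟨FinfModule.add_comm⟩

instance {A : Type*} [FinfAlgebra A] : Std.Associative (α := A) (· * ·) := ⟨FinfAlgebra.mul_assoc⟩

namespace FinfModule

variable {M : Type*} [FinfModule M]

theorem zero_add_s14 (x : M) : (0 : M) + x = 0 := by
  calc (0 : M) + x = x + -x + x := by rw [add_neg]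
    _ = x + x + -x := by ac_rfl
    _ = 0 := by rw [add_idem, add_neg]

end FinfModule

namespace FinfModCong

variable {M : Type*} [FinfModule M] (C : FinfModCong M)

theorem rel_of_eq {p q x y : M} (h : C.rel p q) (hx : p = x) (hy : q = y) : C.rel x y :=
  hx ▸ hy ▸ h

theorem rel_add_left {p q : M} (h : C.rel p q) (r : M) : C.rel (r + p) (r + q) :=
  C.rel_of_eq (C.add_compat r h) (FinfModule.add_comm p r) (FinfModule.add_comm q r)

instance : Trans C.rel C.rel C.rel := ⟨C.trans⟩

theorem not_rel_zero_of_add_left {a b : M} (hab : ¬ C.rel (a + b) 0) : ¬ C.rel a 0 :=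
  fun ha => hab (C.rel_of_eq (C.add_compat b ha) rfl (FinfModule.zero_add_s14 b))

end FinfModCong

namespace FinfCong

variable {A : Type*} [FinfAlgebra A] {C : FinfCong A}

theorem not_rel_zero_mul (hC : FinfCancellative C) {u v : A} (hu : ¬ C.rel u 0)
    (hv : ¬ C.rel v 0) : ¬ C.rel (u * v) 0 := by
  intro huv
  rw [← FinfAlgebra.mul_zero u] at huv
  exact (hC u v 0 huv).elim hu hv

theorem not_rel_zero_apow (hC : FinfCancellative C) {u : A} (hu : ¬ C.rel u 0) :
    ∀ n : ℕ, ¬ C.rel (apow u n) 0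
  | 0 | 1 => hu
  | _ + 2 => not_rel_zero_mul hC hu (not_rel_zero_apow hC hu _)

def CrossRel (C : FinfCong A) (c d x y : A) : Prop :=
  C.rel (x * c + y * d) (x * d + y * c)

theorem CrossRel.mul_right (hcomm : ∀ a b : A, a * b = b * a) {c d x y : A}
    (h : C.CrossRel c d x y) (u : A) : C.CrossRel c d (x * u) (y * u) := by
  have : Std.Commutative (α := A) (· * ·) := ⟨hcomm⟩
  refine C.rel_of_eq (C.mul_compat u h) ?_ ?_ <;>
    simp only [FinfAlgebra.right_distrib] <;> ac_rfl

theorem CrossRel.mul_left (hcomm : ∀ a b : A, a * b = b * a) {c d x y : A}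
    (h : C.CrossRel c d x y) (u : A) : C.CrossRel c d (u * x) (u * y) :=
  hcomm x u ▸ hcomm y u ▸ h.mul_right hcomm u

theorem CrossRel.trans (hcomm : ∀ a b : A, a * b = b * a) (hC : FinfCancellative C)
    {c d x y z : A} (hxy : C.CrossRel c d x y) (hyz : C.CrossRel c d y z)
    (hxy0 : ¬ C.rel (x + y) 0) : C.CrossRel c d x z := by
  have : Std.Commutative (α := A) (· * ·) := ⟨hcomm⟩
  have key : C.rel ((x + y) * (x * c + z * d)) ((x + y) * (x * d + z * c)) := by
    calc
      _ = x * x * c + y * z * d + (y * c + z * d) * x := ?_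
      C.rel _ (x * x * c + y * z * d + (y * d + z * c) * x) :=
        C.rel_add_left (C.mul_compat x hyz) _
      _ = x * z * c + y * z * d + (x * c + y * d) * x := ?_
      C.rel _ (x * z * c + y * z * d + (x * d + y * c) * x) :=
        C.rel_add_left (C.mul_compat x hxy) _
      _ = x * x * d + x * y * c + (x * c + y * d) * z := ?_
      C.rel _ (x * x * d + x * y * c + (x * d + y * c) * z) :=
        C.rel_add_left (C.mul_compat z hxy) _
      _ = x * x * d + y * z * c + (y * c + z * d) * x := ?_
      C.rel _ (x * x * d + y * z * c + (y * d + z * c) * x) :=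
        C.rel_add_left (C.mul_compat x hyz) _
      _ = (x + y) * (x * d + z * c) := ?_
    all_goals simp only [FinfAlgebra.left_distrib, FinfAlgebra.right_distrib]; ac_rfl
  exact (hC _ _ _ key).resolve_left hxy0

end FinfCong

theorem stmt14_general {A : Type*} [FinfAlgebra A] (hcomm : ∀ a b : A, a * b = b * a)
    (C : FinfCong A) (hC : FinfCancellative C) (a b c d : A)
    (h : C.rel (a * c + b * d) (a * d + b * c))
    (hab : ¬ C.rel (a + b) 0) :
    ∀ n : ℕ, 1 ≤ n →
      C.rel (apow a n * c + apow b n * d) (apow a n * d + apow b n * c) := by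
  intro n hn
  induction n, hn using Nat.le_induction with
  | base => exact h
  | succ n hn ih =>
    have hn0 : n ≠ 0 := Nat.one_le_iff_ne_zero.mp hn
    rw [apow_succ a hn0, apow_succ b hn0]
    refine FinfCong.CrossRel.trans hcomm hC (y := b * apow a n) ?_ ?_ ?_
    · exact FinfCong.CrossRel.mul_right hcomm h (apow a n)
    · exact FinfCong.CrossRel.mul_left hcomm ih b
    · have ha : ¬ C.rel a 0 := C.not_rel_zero_of_add_left hab
      rw [← FinfAlgebra.right_distrib]
      exact FinfCong.not_rel_zero_mul hC hab (FinfCong.not_rel_zero_apow hC ha n)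

theorem stmt14 {A : Type*} [FinfAlgebra A] (hcomm : ∀ a b : A, a * b = b * a)
    (C : FinfCong A) (hC : FinfCancellative C) (a b c d : A)
    (h : C.rel (a * c + b * d) (a * d + b * c))
    (hab : ¬ C.rel (a + b) 0) (hcd : ¬ C.rel (c + d) 0) :
    ∀ n : ℕ, 1 ≤ n →
      C.rel (apow a n * c + apow b n * d) (apow a n * d + apow b n * c) :=
  stmt14_general hcomm C hC a b c d h hab
end

section
/- Let A be a unital commutative F∞-algebra and C a cancellative congruence on A. Then A/C embeds into an F∞-field: there exist an F∞-field F and a map φ : A → F with φ(0) = 0, φ(1) = 1, φ(-a) = -φ(a), φ(a+b) = φ(a) + φ(b), φ(ab) = φ(a)·φ(b) for all a, b ∈ A, and such that φ(a) = φ(b) if and only if (a, b) ∈ C. -/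
universe u

/-!
Cancellativity of `C` is exactly what makes `A/C` behave like an integral domain: elements not
congruent to `0` are closed under multiplication and can be cancelled modulo `C`. Hence formal
fractions `a / s` with `s ≁ 0`, identified when `a t ~ b s`, form an F∞-field under the usual
fraction arithmetic `a/s + b/t = (a t + b s)/(s t)`, `(a/s)(b/t) = (a b)/(s t)`; every axiom reduces
to an identity between cross products in `A`, and `a/s ≠ 0` has inverse `s/a`. The map `a ↦ a/1`
is the embedding, and `a/1 = b/1` means `a ~ b`. If `1 ~ 0`, then `C` identifies everything and the
one-point F∞-field (where `0 = 1`) does the job.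
-/

/-- `0` absorbs under `+`, so an F∞-module is not an `AddCommMonoid`. -/
instance FinfModule.toAddCommSemigroup {M : Type*} [FinfModule M] : AddCommSemigroup M where
  add_assoc := FinfModule.add_assoc
  add_comm := FinfModule.add_comm

instance FinfCommAlgebra.toCommMonoid {A : Type*} [FinfCommAlgebra A] : CommMonoid A where
  mul_assoc := FinfAlgebra.mul_assoc
  one_mul := FinfUnitalAlgebra.one_mul
  mul_one := FinfUnitalAlgebra.mul_one
  mul_comm := FinfCommAlgebra.mul_comm

instance PUnit.finfCommAlgebra : FinfCommAlgebra PUnit.{u + 1} where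
  zero := ⟨⟩
  one := ⟨⟩
  neg _ := ⟨⟩
  add _ _ := ⟨⟩
  mul _ _ := ⟨⟩
  add_assoc _ _ _ := rfl
  add_comm _ _ := rfl
  add_idem _ := rfl
  add_neg _ := rfl
  neg_add _ _ := rfl
  neg_neg _ := rfl
  mul_assoc _ _ _ := rfl
  mul_zero _ := rfl
  zero_mul _ := rfl
  neg_mul _ _ := rfl
  mul_neg _ _ := rfl
  left_distrib _ _ _ := rfl
  right_distrib _ _ _ := rfl
  one_mul _ := rfl
  mul_one _ := rfl
  mul_comm _ _ := rfl

theorem FinfModCong.add_rel_add {M : Type*} [FinfModule M] (C : FinfModCong M) {a b c d : M}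
    (hab : C.rel a b) (hcd : C.rel c d) : C.rel (a + c) (b + d) := by
  have hbcd : C.rel (b + c) (b + d) := by
    simpa only [add_comm b] using C.add_compat b hcd
  exact C.trans (C.add_compat c hab) hbcd

namespace FinfCong

variable {A : Type*}

theorem mul_rel_mul [FinfCommAlgebra A] (C : FinfCong A) {a b c d : A}
    (hab : C.rel a b) (hcd : C.rel c d) : C.rel (a * c) (b * d) := by
  have hbcd : C.rel (b * c) (b * d) := by
    simpa only [mul_comm b] using C.mul_compat b hcd
  exact C.trans (C.mul_compat c hab) hbcd

theorem rel_of_rel_one_zero [FinfUnitalAlgebra A] (C : FinfCong A) (h : C.rel 1 0) (a b : A) :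
    C.rel a b := by
  have hall : ∀ x : A, C.rel x 0 := fun x => by
    simpa only [FinfUnitalAlgebra.one_mul, FinfAlgebra.zero_mul] using C.mul_compat x h
  exact C.trans (hall a) (C.symm (hall b))

end FinfCong

namespace FinfCancellative

variable {A : Type*} [FinfAlgebra A] {C : FinfCong A} (hC : FinfCancellative C)
include hC

theorem rel_of_mul_rel_mul {s a b : A} (hs : ¬C.rel s 0) (h : C.rel (s * a) (s * b)) :
    C.rel a b :=
  (hC s a b h).resolve_left hs

theorem mul_not_rel_zero {s t : A} (hs : ¬C.rel s 0) (ht : ¬C.rel t 0) : ¬C.rel (s * t) 0 :=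
  fun h => ht (hC.rel_of_mul_rel_mul hs (by rwa [FinfAlgebra.mul_zero]))

end FinfCancellative

namespace FinfCong

variable {A : Type u} [FinfCommAlgebra A] (C : FinfCong A) (hC : FinfCancellative C)
  (h1 : ¬C.rel 1 0)

def nonzeroSubmonoid : Submonoid A where
  carrier := {s | ¬C.rel s 0}
  one_mem' := h1
  mul_mem' := hC.mul_not_rel_zero

def fracSetoid : Setoid (A × C.nonzeroSubmonoid hC h1) where
  r p q := C.rel (p.1 * q.2) (q.1 * p.2)
  iseqv.refl p := C.refl _
  iseqv.symm := C.symm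
  iseqv.trans := by
    rintro ⟨a, s⟩ ⟨b, t⟩ ⟨c, u⟩ (hab : C.rel (a * t) (b * s))
      (hbc : C.rel (b * u) (c * t))
    have hsu : C.rel (t * (a * u)) (t * (c * s)) := by
      refine C.trans (b := b * u * s) ?_ ?_
      · convert C.mul_compat (u : A) hab using 1 <;> ac_rfl
      · convert C.mul_compat (s : A) hbc using 1
        ac_rfl
    exact hC.rel_of_mul_rel_mul t.2 hsu

def FracField : Type u := Quotient (C.fracSetoid hC h1)

namespace FracField

variable {C hC h1}

def mk (a : A) (s : C.nonzeroSubmonoid hC h1) : C.FracField hC h1 := Quotient.mk _ (a, s)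

@[elab_as_elim]
theorem ind {P : C.FracField hC h1 → Prop} (h : ∀ a s, P (mk a s)) (x : C.FracField hC h1) :
    P x :=
  Quotient.ind (fun p => h p.1 p.2) x

theorem mk_eq_mk_iff {a b : A} {s t : C.nonzeroSubmonoid hC h1} :
    mk a s = mk b t ↔ C.rel (a * t) (b * s) :=
  Quotient.eq

theorem mk_eq_mk_of_eq {a b : A} {s t : C.nonzeroSubmonoid hC h1} (h : a * t = b * s) :
    mk a s = mk b t :=
  mk_eq_mk_iff.2 (h ▸ C.refl _)

instance : Zero (C.FracField hC h1) := ⟨mk 0 1⟩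

instance : One (C.FracField hC h1) := ⟨mk 1 1⟩

instance : Neg (C.FracField hC h1) where
  neg := Quotient.map (fun p => (-p.1, p.2)) <| by
    rintro ⟨a, s⟩ ⟨b, t⟩ (h : C.rel (a * t) (b * s))
    show C.rel (-a * t) (-b * s)
    simpa only [FinfAlgebra.neg_mul] using C.neg_compat h

instance : Add (C.FracField hC h1) where
  add := Quotient.map₂ (fun p q => (p.1 * q.2 + q.1 * p.2, p.2 * q.2))
    <| by
      rintro ⟨a, s⟩ ⟨a', s'⟩ (ha : C.rel (a * s') (a' * s))
        ⟨b, t⟩ ⟨b', t'⟩ (hb : C.rel (b * t') (b' * t))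
      show C.rel ((a * t + b * s) * ↑(s' * t')) ((a' * t' + b' * s') * ↑(s * t))
      convert C.add_rel_add (C.mul_compat (t * t' : A) ha) (C.mul_compat (s * s' : A) hb)
        using 1 <;> simp only [Submonoid.coe_mul, FinfAlgebra.right_distrib] <;> ac_rfl

instance : Mul (C.FracField hC h1) where
  mul := Quotient.map₂ (fun p q => (p.1 * q.1, p.2 * q.2))
    <| by
      rintro ⟨a, s⟩ ⟨a', s'⟩ (ha : C.rel (a * s') (a' * s))
        ⟨b, t⟩ ⟨b', t'⟩ (hb : C.rel (b * t') (b' * t))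
      show C.rel (a * b * ↑(s' * t')) (a' * b' * ↑(s * t))
      convert C.mul_rel_mul ha hb using 1 <;> simp only [Submonoid.coe_mul] <;> ac_rfl

theorem zero_def : (0 : C.FracField hC h1) = mk 0 1 := rfl

theorem one_def : (1 : C.FracField hC h1) = mk 1 1 := rfl

theorem neg_mk (a : A) (s) : -(mk a s : C.FracField hC h1) = mk (-a) s := rfl

theorem mk_add_mk (a b : A) (s t) :
    (mk a s + mk b t : C.FracField hC h1) = mk (a * t + b * s) (s * t) := rfl

theorem mk_mul_mk (a b : A) (s t) :
    (mk a s * mk b t : C.FracField hC h1) = mk (a * b) (s * t) := rfl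

instance : FinfCommAlgebra (C.FracField hC h1) where
  add_assoc := by
    refine ind fun a s => ind fun b t => ind fun c u => ?_
    simp only [mk_add_mk]
    refine mk_eq_mk_of_eq ?_
    simp only [Submonoid.coe_mul, FinfAlgebra.right_distrib]
    ac_rfl
  add_comm := by
    refine ind fun a s => ind fun b t => ?_
    simp only [mk_add_mk]
    refine mk_eq_mk_of_eq ?_
    ac_rfl
  add_idem := by
    refine ind fun a s => ?_
    simp only [mk_add_mk, FinfModule.add_idem]
    refine mk_eq_mk_of_eq ?_
    simp only [Submonoid.coe_mul]
    ac_rfl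
  add_neg := by
    refine ind fun a s => ?_
    simp only [neg_mk, mk_add_mk, FinfAlgebra.neg_mul, FinfModule.add_neg, zero_def]
    refine mk_eq_mk_of_eq ?_
    simp only [FinfAlgebra.zero_mul]
  neg_add := by
    refine ind fun a s => ind fun b t => ?_
    simp only [neg_mk, mk_add_mk, FinfAlgebra.neg_mul, FinfModule.neg_add]
  neg_neg := by
    refine ind fun a s => ?_
    simp only [neg_mk, FinfModule.neg_neg]
  mul_assoc := by
    refine ind fun a s => ind fun b t => ind fun c u => ?_
    simp only [mk_mul_mk, mul_assoc]
  mul_zero := by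
    refine ind fun a s => ?_
    simp only [zero_def, mk_mul_mk, FinfAlgebra.mul_zero]
    refine mk_eq_mk_of_eq ?_
    simp only [FinfAlgebra.zero_mul]
  zero_mul := by
    refine ind fun a s => ?_
    simp only [zero_def, mk_mul_mk, FinfAlgebra.zero_mul]
    refine mk_eq_mk_of_eq ?_
    simp only [FinfAlgebra.zero_mul]
  neg_mul := by
    refine ind fun a s => ind fun b t => ?_
    simp only [neg_mk, mk_mul_mk, FinfAlgebra.neg_mul]
  mul_neg := by
    refine ind fun a s => ind fun b t => ?_
    simp only [neg_mk, mk_mul_mk, FinfAlgebra.mul_neg]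
  left_distrib := by
    refine ind fun a s => ind fun b t => ind fun c u => ?_
    simp only [mk_mul_mk, mk_add_mk]
    refine mk_eq_mk_of_eq ?_
    simp only [Submonoid.coe_mul, FinfAlgebra.left_distrib, FinfAlgebra.right_distrib]
    ac_rfl
  right_distrib := by
    refine ind fun a s => ind fun b t => ind fun c u => ?_
    simp only [mk_mul_mk, mk_add_mk]
    refine mk_eq_mk_of_eq ?_
    simp only [Submonoid.coe_mul, FinfAlgebra.right_distrib]
    ac_rfl
  one_mul := ind fun a s => by simp only [one_def, mk_mul_mk, one_mul]
  mul_one := ind fun a s => by simp only [one_def, mk_mul_mk, mul_one]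
  mul_comm := by
    refine ind fun a s => ind fun b t => ?_
    simp only [mk_mul_mk, mul_comm]

theorem mk_eq_zero_iff {a : A} {s : C.nonzeroSubmonoid hC h1} : mk a s = 0 ↔ C.rel a 0 := by
  rw [zero_def, mk_eq_mk_iff, Submonoid.coe_one, mul_one, FinfAlgebra.zero_mul]

theorem exists_mul_eq_one (x : C.FracField hC h1) (hx : x ≠ 0) : ∃ y, x * y = 1 := by
  induction x using ind with
  | h a s =>
    have ha : ¬C.rel a 0 := fun h => hx (mk_eq_zero_iff.2 h)
    refine ⟨mk s ⟨a, ha⟩, ?_⟩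
    rw [mk_mul_mk, one_def]
    exact mk_eq_mk_of_eq (by simp only [Submonoid.coe_mul, Submonoid.coe_one, mul_one, mul_comm])

def of (a : A) : C.FracField hC h1 := mk a 1

theorem of_eq_of_iff {a b : A} : (of a : C.FracField hC h1) = of b ↔ C.rel a b := by
  simp only [of, mk_eq_mk_iff, Submonoid.coe_one, mul_one]

theorem of_add (a b : A) : (of (a + b) : C.FracField hC h1) = of a + of b := by
  simp only [of, mk_add_mk, Submonoid.coe_one, mul_one]

theorem of_mul (a b : A) : (of (a * b) : C.FracField hC h1) = of a * of b := by
  simp only [of, mk_mul_mk, mul_one]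

end FracField

end FinfCong

theorem stmt16 {A : Type u} [FinfCommAlgebra A] (C : FinfCong A)
    (hC : FinfCancellative C) :
    ∃ (F : Type u) (_ : FinfCommAlgebra F),
      (∀ a : F, a ≠ 0 → ∃ b : F, a * b = 1) ∧
      ∃ φ : A → F, φ 0 = 0 ∧ φ 1 = 1 ∧ (∀ a : A, φ (-a) = -(φ a)) ∧
        (∀ a b : A, φ (a + b) = φ a + φ b) ∧
        (∀ a b : A, φ (a * b) = φ a * φ b) ∧
        ∀ a b : A, φ a = φ b ↔ C.rel a b := by
  by_cases h1 : C.rel 1 0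
  · exact ⟨PUnit, inferInstance, fun a ha => absurd (Subsingleton.elim a 0) ha, fun _ => ⟨⟩,
      rfl, rfl, fun _ => rfl, fun _ _ => rfl, fun _ _ => rfl,
      fun a b => iff_of_true rfl (C.rel_of_rel_one_zero h1 a b)⟩
  · open FinfCong.FracField in
    exact ⟨C.FracField hC h1, inferInstance, exists_mul_eq_one, of,
      rfl, rfl, fun _ => rfl, of_add, of_mul, fun _ _ => of_eq_of_iff⟩
end

section
/- Let F be an F∞-field. Then the trivial congruence (the diagonal) is the intersection of all prime congruences on F: for every a, b ∈ F with a ≠ b there exists a prime congruence P on F with (a, b) ∉ P. -/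
/- ===================== auxiliary development ===================== -/

section SxBasic
variable {F : Type*} [FinfCommAlgebra F]

instance sxCommMonoid : CommMonoid F where
  mul_assoc := FinfAlgebra.mul_assoc
  one_mul := FinfUnitalAlgebra.one_mul
  mul_one := FinfUnitalAlgebra.mul_one
  mul_comm := FinfCommAlgebra.mul_comm

instance sxAddCommSemigroup : AddCommSemigroup F where
  add_assoc := FinfModule.add_assoc
  add_comm := FinfModule.add_comm

lemma sx_idem (x : F) : x + x = x := FinfModule.add_idem x
lemma sx_mul_add (a b c : F) : a * (b + c) = a * b + a * c := FinfAlgebra.left_distrib a b c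
lemma sx_add_mul (a b c : F) : (a + b) * c = a * c + b * c := FinfAlgebra.right_distrib a b c
lemma sx_mul_zero (a : F) : a * 0 = 0 := FinfAlgebra.mul_zero a
lemma sx_zero_mul (a : F) : (0:F) * a = 0 := FinfAlgebra.zero_mul a

lemma sx_zero_add (x : F) : (0:F) + x = 0 := by
  have h : (0:F) + x = (x + -x) + x := by rw [FinfModule.add_neg]
  rw [h, add_assoc, add_comm (-x) x, ← add_assoc, sx_idem, FinfModule.add_neg]

lemma sx_add_zero (x : F) : x + (0:F) = 0 := by rw [add_comm]; exact sx_zero_add x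

lemma sx_neg_mul' (a b : F) : (-a) * b = -(a * b) := FinfAlgebra.neg_mul a b

end SxBasic

section SxField
variable {F : Type*} [FinfCommAlgebra F]
variable (hinv : ∀ x : F, x ≠ 0 → ∃ y : F, x * y = 1)
attribute [local instance] Classical.propDecidable
include hinv

noncomputable def sxInv (x : F) : F :=
  if h : x = 0 then 0 else Classical.choose (hinv x h)

lemma sx_mul_inv {x : F} (hx : x ≠ 0) : x * sxInv hinv x = 1 := by
  rw [sxInv, dif_neg hx]; exact Classical.choose_spec (hinv x hx)

lemma sx_inv_mul {x : F} (hx : x ≠ 0) : sxInv hinv x * x = 1 := by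
  rw [mul_comm]; exact sx_mul_inv hinv hx

lemma sx_mul_ne_zero {x y : F} (hx : x ≠ 0) (hy : y ≠ 0) : x * y ≠ 0 := by
  intro h
  have : y = 0 := by
    have h2 : sxInv hinv x * (x * y) = sxInv hinv x * 0 := by rw [h]
    rwa [← mul_assoc, sx_inv_mul hinv hx, one_mul, sx_mul_zero] at h2
  exact hy this

lemma sx_mul_eq_zero {x y : F} (h : x * y = 0) (hx : x ≠ 0) : y = 0 := by
  by_contra hy; exact sx_mul_ne_zero hinv hx hy h

lemma sx_cancel {x y c : F} (h : x * c = y * c) (hc : c ≠ 0) : x = y := by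
  have : x * (c * sxInv hinv c) = y * (c * sxInv hinv c) := by
    rw [← mul_assoc, ← mul_assoc, h]
  rwa [sx_mul_inv hinv hc, mul_one, mul_one] at this

lemma sx_inv_ne_zero {x : F} (hx : x ≠ 0) (h10 : (1:F) ≠ 0) : sxInv hinv x ≠ 0 := by
  intro h
  apply h10
  have := sx_mul_inv hinv hx
  rw [h, sx_mul_zero] at this
  exact this.symm

lemma sx_inv_mul_self {x y : F} (hx : x ≠ 0) : x * (sxInv hinv x * y) = y := by
  rw [← mul_assoc, sx_mul_inv hinv hx, one_mul]

end SxField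
section SxStabSec
variable {F : Type*} [FinfCommAlgebra F]
variable (hinv : ∀ x : F, x ≠ 0 → ∃ y : F, x * y = 1)

def SxStab (x : F) : Prop := ∀ c : F, x + c = 0 ↔ (1:F) + c = 0

lemma sx_stab_one : SxStab (1:F) := fun _ => Iff.rfl

include hinv in
lemma sx_stab_mul {x y : F} (hx : x ≠ 0) (hy : y ≠ 0)
    (sx : SxStab x) (sy : SxStab y) : SxStab (x * y) := by
  intro c
  set e := sxInv hinv x * c with he
  have hc : c = x * e := by rw [he, ← mul_assoc, sx_mul_inv hinv hx, one_mul]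
  constructor
  · intro h
    have h1 : x * (y + e) = 0 := by rw [sx_mul_add, ← hc]; exact h
    have h2 : y + e = 0 := sx_mul_eq_zero hinv h1 hx
    have h3 : (1:F) + e = 0 := (sy e).1 h2
    have h5 : x + c = 0 := by
      have hx1 : x + c = x * (1 + e) := by rw [sx_mul_add, mul_one, hc]
      rw [hx1, h3, sx_mul_zero]
    exact (sx c).1 h5
  · intro h
    have h5 : x + c = 0 := (sx c).2 h
    have h4 : x * (1 + e) = 0 := by rw [sx_mul_add, mul_one, ← hc]; exact h5
    have h3 : (1:F) + e = 0 := sx_mul_eq_zero hinv h4 hx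
    have h2 : y + e = 0 := (sy e).2 h3
    calc x * y + c = x * (y + e) := by rw [sx_mul_add, ← hc]
    _ = 0 := by rw [h2, sx_mul_zero]

include hinv in
lemma sx_stab_inv {x : F} (hx : x ≠ 0) (sx : SxStab x) : SxStab (sxInv hinv x) := by
  intro c
  have key : ∀ d : F, x * (sxInv hinv x + d) = 1 + x * d := by
    intro d; rw [sx_mul_add, sx_mul_inv hinv hx]
  constructor
  · intro h
    have h1 : (1:F) + x * c = 0 := by rw [← key, h, sx_mul_zero]
    have h2 : x + x * c = 0 := (sx (x*c)).2 h1
    have h3 : x * (1 + c) = 0 := by rw [sx_mul_add, mul_one]; exact h2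
    exact sx_mul_eq_zero hinv h3 hx
  · intro h
    have h3 : x * (1 + c) = 0 := by rw [h, sx_mul_zero]
    have h2 : x + x * c = 0 := by
      have hx1 : x + x * c = x * (1 + c) := by rw [sx_mul_add, mul_one]
      rw [hx1]; exact h3
    have h1 : (1:F) + x * c = 0 := (sx (x*c)).1 h2
    have h4 := key c
    rw [h1] at h4
    exact sx_mul_eq_zero hinv h4 hx

end SxStabSec

section SxPow
variable {F : Type*} [FinfCommAlgebra F]

lemma sx_one_add_one : (1:F) + 1 = 1 := sx_idem 1

lemma sx_p0_mul {x y : F} (hx : (1:F) + x = x) (hy : (1:F) + y = y) :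
    (1:F) + x * y = x * y := by
  have h1 : x * y = y + x * y := by
    conv_lhs => rw [← hx]
    rw [sx_add_mul, one_mul]
  calc (1:F) + x * y = 1 + (y + x * y) := by rw [← h1]
  _ = (1 + y) + x * y := by rw [add_assoc]
  _ = y + x * y := by rw [hy]
  _ = x * y := h1.symm

lemma sx_p0_pow {x : F} (hx : (1:F) + x = x) : ∀ n : ℕ, n ≠ 0 → (1:F) + x ^ n = x ^ n := by
  intro n
  induction n with
  | zero => intro h; exact absurd rfl h
  | succ m ih =>
    intro _
    rcases Nat.eq_zero_or_pos m with hm | hm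
    · subst hm; simpa using hx
    · rw [pow_succ]
      exact sx_p0_mul (ih (Nat.pos_iff_ne_zero.mp hm)) hx

variable (z : F)

lemma sx_p0_u : (1:F) + (1 + z) = 1 + z := by
  rw [← add_assoc, sx_one_add_one]

lemma sx_u_expand (n : ℕ) : (1 + z) ^ (n+1) = (1+z)^n + z * (1+z)^n := by
  rw [pow_succ, mul_comm ((1+z)^n) (1+z), sx_add_mul, one_mul]

lemma sx_abs' : ∀ m k : ℕ, k ≤ m → (1+z)^m + z^k = (1+z)^m := by
  intro m
  induction m with
  | zero =>
    intro k hk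
    interval_cases k
    simpa using sx_one_add_one
  | succ m ih =>
    intro k hk
    cases k with
    | zero =>
      rw [pow_zero, add_comm]
      exact sx_p0_pow (sx_p0_u z) (m+1) (Nat.succ_ne_zero m)
    | succ k' =>
      have hk' : k' ≤ m := Nat.succ_le_succ_iff.mp hk
      calc (1+z)^(m+1) + z^(k'+1)
          = ((1+z)^m + z*(1+z)^m) + z*z^k' := by rw [sx_u_expand, pow_succ, mul_comm (z^k') z]
      _ = (1+z)^m + z*((1+z)^m + z^k') := by rw [add_assoc, ← sx_mul_add]
      _ = (1+z)^m + z*(1+z)^m := by rw [ih k' hk']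
      _ = (1+z)^(m+1) := (sx_u_expand z m).symm

lemma sx_abs {k l n : ℕ} (h : k + l ≤ n) : (1+z)^n + z^k * (1+z)^l = (1+z)^n := by
  obtain ⟨m, rfl⟩ : ∃ m, n = m + l := ⟨n - l, by omega⟩
  have hkm : k ≤ m := by omega
  calc (1+z)^(m+l) + z^k * (1+z)^l
      = ((1+z)^m + z^k) * (1+z)^l := by rw [pow_add, sx_add_mul]
  _ = (1+z)^m * (1+z)^l := by rw [sx_abs' z m k hkm]
  _ = (1+z)^(m+l) := (pow_add _ _ _).symm

lemma sx_E2 : ∀ q : ℕ, (1+z)^q + z^(q+1) = (1+z)^(q+1) := by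
  intro q
  induction q with
  | zero => rw [pow_zero, pow_one, pow_one]
  | succ q ih =>
    have habs : (1+z)^(q+1) + z*(1+z)^q = (1+z)^(q+1) := by
      have := sx_abs z (k := 1) (l := q) (n := q+1) (by omega)
      rwa [pow_one] at this
    calc (1+z)^(q+1) + z^(q+2)
        = ((1+z)^q + z*(1+z)^q) + z*z^(q+1) := by
          rw [sx_u_expand, pow_succ, mul_comm (z^(q+1)) z]
    _ = (1+z)^q + z*((1+z)^q + z^(q+1)) := by rw [add_assoc, ← sx_mul_add]
    _ = (1+z)^q + z*(1+z)^(q+1) := by rw [ih]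
    _ = (1+z)^q + (z*(1+z)^q + z*(z*(1+z)^q)) := by rw [sx_u_expand z q, sx_mul_add]
    _ = (1+z)^(q+1) + z*(z*(1+z)^q) := by rw [← add_assoc, ← sx_u_expand]
    _ = ((1+z)^(q+1) + z*(1+z)^q) + z*(z*(1+z)^q) := by rw [habs]
    _ = (1+z)^(q+1) + (z*(1+z)^q + z*(z*(1+z)^q)) := by rw [add_assoc]
    _ = (1+z)^(q+1) + z*((1+z)^q + z*(1+z)^q) := by rw [← sx_mul_add]
    _ = (1+z)^(q+1) + z*(1+z)^(q+1) := by rw [← sx_u_expand]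
    _ = (1+z)^(q+2) := (sx_u_expand z (q+1)).symm

end SxPow
section SxPow2
variable {F : Type*} [FinfCommAlgebra F]
variable (z : F)

lemma sx_abs1 {l n : ℕ} (h : 1 + l ≤ n) : (1+z)^n + z*(1+z)^l = (1+z)^n := by
  have := sx_abs z (k := 1) (l := l) (n := n) h
  rwa [pow_one] at this

lemma sx_MZ : ∀ p q : ℕ, z^q * (1+z)^p + (1+z)^q = (1+z)^(p+q) := by
  intro p
  induction p with
  | zero =>
    intro q
    rw [pow_zero, mul_one, add_comm, Nat.zero_add]
    exact sx_abs' z q q le_rfl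
  | succ p ih =>
    intro q
    rcases Nat.eq_zero_or_pos p with hp | hp
    · subst hp
      have e1 : z^q * (1+z)^(0+1) = z^q + z^(q+1) := by
        rw [Nat.zero_add, pow_one, sx_mul_add, mul_one, ← pow_succ]
      calc z^q * (1+z)^(0+1) + (1+z)^q
          = ((1+z)^q + z^q) + z^(q+1) := by rw [e1]; ac_rfl
      _ = (1+z)^q + z^(q+1) := by rw [sx_abs' z q q le_rfl]
      _ = (1+z)^(q+1) := sx_E2 z q
      _ = (1+z)^(0+1+q) := by rw [Nat.zero_add, Nat.add_comm q 1]
    · have e1 : z^q * (1+z)^(p+1) = z^q*(1+z)^p + z^(q+1)*(1+z)^p := by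
        rw [sx_u_expand z p, sx_mul_add, ← mul_assoc, ← pow_succ]
      have e2 : z*(1+z)^q + z^(q+1)*(1+z)^p = z*((1+z)^q + z^q*(1+z)^p) := by
        rw [sx_mul_add, pow_succ]; ac_rfl
      calc z^q * (1+z)^(p+1) + (1+z)^q
          = (z^q*(1+z)^p + (1+z)^q) + z^(q+1)*(1+z)^p := by rw [e1]; ac_rfl
      _ = (1+z)^(p+q) + z^(q+1)*(1+z)^p := by rw [ih q]
      _ = ((1+z)^(p+q) + z*(1+z)^q) + z^(q+1)*(1+z)^p := by
            rw [sx_abs1 z (show 1+q ≤ p+q by omega)]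
      _ = (1+z)^(p+q) + (z*(1+z)^q + z^(q+1)*(1+z)^p) := by rw [add_assoc]
      _ = (1+z)^(p+q) + z*((1+z)^q + z^q*(1+z)^p) := by rw [e2]
      _ = (1+z)^(p+q) + z*(1+z)^(p+q) := by rw [add_comm ((1+z)^q), ih q]
      _ = (1+z)^(p+q+1) := (sx_u_expand z (p+q)).symm
      _ = (1+z)^(p+1+q) := by rw [Nat.add_right_comm]

variable (z' : F) (hzz' : z * z' = 1)

include hzz' in
lemma sx_ubar : (1 + z') = z' * (1 + z) := by
  rw [sx_mul_add, mul_one, mul_comm z' z, hzz', add_comm]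

include hzz' in
lemma sx_S1 (p q : ℕ) : (1+z)^p + (1+z')^q = (1+z)^p * (1+z')^q := by
  have hub : (1+z')^q = z'^q * (1+z)^q := by rw [sx_ubar z z' hzz', mul_pow]
  have key : ((1+z)^p + (1+z')^q) * z^q = (1+z)^(p+q) := by
    calc ((1+z)^p + (1+z')^q) * z^q
        = (1+z)^p * z^q + (z'^q * (1+z)^q) * z^q := by rw [sx_add_mul, hub]
    _ = z^q * (1+z)^p + (z^q*z'^q) * (1+z)^q := by ac_rfl
    _ = z^q * (1+z)^p + (1+z)^q := by rw [← mul_pow, hzz', one_pow, one_mul]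
    _ = (1+z)^(p+q) := sx_MZ z p q
  have hz'q : z^q * z'^q = 1 := by rw [← mul_pow, hzz', one_pow]
  calc (1+z)^p + (1+z')^q
      = ((1+z)^p + (1+z')^q) * (z^q * z'^q) := by rw [hz'q, mul_one]
  _ = ((1+z)^(p+q)) * z'^q := by rw [← mul_assoc, key]
  _ = (1+z)^p * ((1+z)^q * z'^q) := by rw [pow_add, mul_assoc]
  _ = (1+z)^p * (1+z')^q := by rw [hub, mul_comm (z'^q)]

include hzz' in
lemma sx_SUMPOW (p q r s : ℕ) :
    (1+z)^p * (1+z')^q + (1+z)^r * (1+z')^s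
      = (1+z)^(max p r) * (1+z')^(max q s) := by
  have h1z : (1:F) + (1+z) = (1+z) := sx_p0_u z
  have h1z' : (1:F) + (1+z') = (1+z') := sx_p0_u z'
  have p0uv : ∀ k l : ℕ, (1:F) + (1+z)^k * (1+z')^l = (1+z)^k * (1+z')^l := by
    intro k l
    rcases Nat.eq_zero_or_pos k with hk | hk
    · subst hk
      rcases Nat.eq_zero_or_pos l with hl | hl
      · subst hl; simpa using sx_one_add_one
      · rw [pow_zero, one_mul]; exact sx_p0_pow h1z' l (by omega)
    · rcases Nat.eq_zero_or_pos l with hl | hl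
      · subst hl; rw [pow_zero, mul_one]; exact sx_p0_pow h1z k (by omega)
      · exact sx_p0_mul (sx_p0_pow h1z k (by omega)) (sx_p0_pow h1z' l (by omega))
  -- main case analysis
  rcases le_total p r with hpr | hpr
  · obtain ⟨k, rfl⟩ : ∃ k, r = p + k := ⟨r - p, by omega⟩
    rcases le_total q s with hqs | hqs
    · obtain ⟨l, rfl⟩ : ∃ l, s = q + l := ⟨s - q, by omega⟩
      have : (1+z)^p * (1+z')^q + (1+z)^(p+k) * (1+z')^(q+l)
          = ((1+z)^p * (1+z')^q) * (1 + (1+z)^k * (1+z')^l) := by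
        rw [sx_mul_add, mul_one, pow_add, pow_add]; ac_rfl
      rw [this, p0uv k l, max_eq_right hpr, max_eq_right hqs, pow_add, pow_add]; ac_rfl
    · obtain ⟨l, rfl⟩ : ∃ l, q = s + l := ⟨q - s, by omega⟩
      have : (1+z)^p * (1+z')^(s+l) + (1+z)^(p+k) * (1+z')^s
          = ((1+z)^p * (1+z')^s) * ((1+z')^l + (1+z)^k) := by
        rw [sx_mul_add, pow_add, pow_add]; ac_rfl
      rw [this, add_comm ((1+z')^l), sx_S1 z z' hzz' k l,
        max_eq_right hpr, max_eq_left (by omega : s ≤ s + l), pow_add, pow_add]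
      ac_rfl
  · obtain ⟨k, rfl⟩ : ∃ k, p = r + k := ⟨p - r, by omega⟩
    rcases le_total q s with hqs | hqs
    · obtain ⟨l, rfl⟩ : ∃ l, s = q + l := ⟨s - q, by omega⟩
      have : (1+z)^(r+k) * (1+z')^q + (1+z)^r * (1+z')^(q+l)
          = ((1+z)^r * (1+z')^q) * ((1+z)^k + (1+z')^l) := by
        rw [sx_mul_add, pow_add, pow_add]; ac_rfl
      rw [this, sx_S1 z z' hzz' k l,
        max_eq_left (by omega : r ≤ r + k), max_eq_right hqs, pow_add, pow_add]
      ac_rfl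
    · obtain ⟨l, rfl⟩ : ∃ l, q = s + l := ⟨q - s, by omega⟩
      have : (1+z)^(r+k) * (1+z')^(s+l) + (1+z)^r * (1+z')^s
          = ((1+z)^r * (1+z')^s) * ((1+z)^k * (1+z')^l + 1) := by
        rw [sx_mul_add, mul_one, pow_add, pow_add]; ac_rfl
      rw [this, add_comm ((1+z)^k * (1+z')^l), p0uv k l,
        max_eq_left (by omega : r ≤ r + k), max_eq_left (by omega : s ≤ s + l),
        pow_add, pow_add]
      ac_rfl

include hzz' in
lemma sx_CORE (a b c d : ℕ) :
    ((1+z)^a * (1+z')^c + (1+z)^b * (1+z')^d) + (1+z)^b * (1+z')^c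
      = (1+z)^a * (1+z')^c + (1+z)^b * (1+z')^d := by
  rw [sx_SUMPOW z z' hzz' a c b d, sx_SUMPOW z z' hzz' (max a b) (max c d) b c,
    max_eq_left (le_max_right a b), max_eq_left (le_max_left c d)]

end SxPow2
section SxList
variable {F : Type*} [FinfCommAlgebra F]
attribute [local instance] Classical.propDecidable

def sxP1 (l : List F) : F := (l.map (fun c => 1 + c)).prod
def sxPu (z : F) (l : List F) : F := (l.map (fun c => 1 + z + c)).prod
def sxOk (l : List F) : Prop := ∀ c ∈ l, (1:F) + c ≠ 0
noncomputable def sxCnt (l : List F) : ℕ := l.countP (fun c => decide (c ≠ 1))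

variable (z : F)

lemma sx_uz1 : (1:F) + z + 1 = 1 + z := by
  calc (1:F) + z + 1 = (1+1) + z := by ac_rfl
  _ = 1 + z := by rw [sx_one_add_one]

lemma sxP1_nil : sxP1 ([] : List F) = 1 := rfl
lemma sxPu_nil : sxPu z ([] : List F) = 1 := rfl

lemma sxP1_cons (c : F) (l : List F) : sxP1 (c :: l) = (1+c) * sxP1 l := by
  simp only [sxP1, List.map_cons, List.prod_cons]

lemma sxPu_cons (c : F) (l : List F) : sxPu z (c :: l) = (1+z+c) * sxPu z l := by
  simp only [sxPu, List.map_cons, List.prod_cons]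

lemma sxP1_append (l₁ l₂ : List F) : sxP1 (l₁ ++ l₂) = sxP1 l₁ * sxP1 l₂ := by
  simp only [sxP1, List.map_append, List.prod_append]

lemma sxPu_append (l₁ l₂ : List F) : sxPu z (l₁ ++ l₂) = sxPu z l₁ * sxPu z l₂ := by
  simp only [sxPu, List.map_append, List.prod_append]

lemma sxP1_extract (l₁ l₂ : List F) (c₀ : F) :
    sxP1 (l₁ ++ c₀ :: l₂) = (1+c₀) * sxP1 (l₁ ++ l₂) := by
  rw [sxP1_append, sxP1_cons, sxP1_append]; ac_rfl

lemma sxPu_extract (l₁ l₂ : List F) (c₀ : F) :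
    sxPu z (l₁ ++ c₀ :: l₂) = (1+z+c₀) * sxPu z (l₁ ++ l₂) := by
  rw [sxPu_append, sxPu_cons, sxPu_append]; ac_rfl

lemma sxP1_cons_one (l : List F) : sxP1 ((1:F) :: l) = sxP1 l := by
  rw [sxP1_cons, sx_one_add_one, one_mul]

lemma sxPu_cons_one (l : List F) : sxPu z ((1:F) :: l) = (1+z) * sxPu z l := by
  rw [sxPu_cons, sx_uz1]

lemma sxP1_ones : ∀ l : List F, (∀ c ∈ l, c = (1:F)) → sxP1 l = 1 := by
  intro l
  induction l with
  | nil => intro _; rfl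
  | cons a l ih =>
    intro h
    have ha : a = 1 := h a (by simp)
    subst ha
    rw [sxP1_cons_one]
    exact ih (fun c hc => h c (by simp [hc]))

lemma sxPu_ones : ∀ l : List F, (∀ c ∈ l, c = (1:F)) → sxPu z l = (1+z)^l.length := by
  intro l
  induction l with
  | nil => intro _; rfl
  | cons a l ih =>
    intro h
    have ha : a = 1 := h a (by simp)
    subst ha
    rw [sxPu_cons_one, List.length_cons, ih (fun c hc => h c (by simp [hc])), pow_succ]
    ac_rfl

lemma sxCnt_cons_one (l : List F) : sxCnt ((1:F) :: l) = sxCnt l := by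
  simp [sxCnt, List.countP_cons]

lemma sxCnt_cons_ne {c₀ : F} (l : List F) (h : c₀ ≠ 1) : sxCnt (c₀ :: l) = sxCnt l + 1 := by
  simp [sxCnt, List.countP_cons, h]

lemma sxCnt_append (l₁ l₂ : List F) : sxCnt (l₁ ++ l₂) = sxCnt l₁ + sxCnt l₂ :=
  List.countP_append

lemma sx_split : ∀ (l : List F), (¬ ∀ c ∈ l, c = (1:F)) →
    ∃ l₁ c₀ l₂, l = l₁ ++ c₀ :: l₂ ∧ c₀ ≠ (1:F) := by
  intro l
  induction l with
  | nil => intro h; exact absurd (by simp) h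
  | cons a l ih =>
    intro h
    by_cases ha : a = (1:F)
    · subst ha
      have h' : ¬ ∀ c ∈ l, c = (1:F) := by
        intro hl; exact h (by simpa using hl)
      obtain ⟨l₁, c₀, l₂, rfl, hc⟩ := ih h'
      exact ⟨1 :: l₁, c₀, l₂, rfl, hc⟩
    · exact ⟨[], a, l, rfl, ha⟩

variable (hinv : ∀ x : F, x ≠ 0 → ∃ y : F, x * y = 1)

include hinv in
lemma sx_adm {c : F} (h1 : (1:F)+z ≠ 0) (hc : (1:F)+c ≠ 0) : (1:F)+z+c ≠ 0 := by
  intro h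
  have hexp : (1+z)*(1+c) = ((1:F)+z+c) + z*c := by
    rw [sx_mul_add, mul_one, sx_add_mul, one_mul]; ac_rfl
  rw [h, sx_zero_add] at hexp
  exact sx_mul_ne_zero hinv h1 hc hexp

include hinv in
lemma sxP1_ne_zero (h10 : (1:F) ≠ 0) : ∀ l : List F, sxOk l → sxP1 l ≠ 0 := by
  intro l
  induction l with
  | nil => intro _; simpa [sxP1_nil] using h10
  | cons a l ih =>
    intro ok
    rw [sxP1_cons]
    exact sx_mul_ne_zero hinv (ok a (by simp)) (ih (fun c hc => ok c (by simp [hc])))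

include hinv in
lemma sxPu_ne_zero (h10 : (1:F) ≠ 0) (h1 : (1:F)+z ≠ 0) :
    ∀ l : List F, sxOk l → sxPu z l ≠ 0 := by
  intro l
  induction l with
  | nil => intro _; simpa [sxPu_nil] using h10
  | cons a l ih =>
    intro ok
    rw [sxPu_cons]
    exact sx_mul_ne_zero hinv (sx_adm z hinv h1 (ok a (by simp)))
      (ih (fun c hc => ok c (by simp [hc])))

lemma sx_step (wX wY wZ c X Y Z : F)
    (ih1 : (X + Y) + Z = X + Y)
    (ih2 : (wX*X + wY*Y) + wZ*Z = wX*X + wY*Y) :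
    ((wX+c)*X + (wY+c)*Y) + (wZ+c)*Z = (wX+c)*X + (wY+c)*Y := by
  calc ((wX+c)*X + (wY+c)*Y) + (wZ+c)*Z
      = ((wX*X + wY*Y) + wZ*Z) + c*((X + Y) + Z) := by
        simp only [sx_add_mul, sx_mul_add]; ac_rfl
  _ = (wX*X + wY*Y) + c*(X+Y) := by rw [ih1, ih2]
  _ = (wX+c)*X + (wY+c)*Y := by simp only [sx_add_mul, sx_mul_add]; ac_rfl

end SxList
section SxFW
variable {F : Type*} [FinfCommAlgebra F]

lemma sx_stepA (w c X Y Z : F)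
    (ih1 : (X + Y) + Z = X + Y) (ih2 : (w*X + Y) + Z = w*X + Y) :
    ((w+c)*X + (1+c)*Y) + (1+c)*Z = (w+c)*X + (1+c)*Y := by
  calc ((w+c)*X + (1+c)*Y) + (1+c)*Z
      = ((w*X + Y) + Z) + c*((X + Y) + Z) := by
        simp only [sx_add_mul, sx_mul_add, one_mul]; ac_rfl
  _ = (w*X + Y) + c*(X+Y) := by rw [ih1, ih2]
  _ = (w+c)*X + (1+c)*Y := by simp only [sx_add_mul, sx_mul_add, one_mul]; ac_rfl

lemma sx_stepB (w c X Y Z : F)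
    (ih1 : (X + Y) + Z = X + Y) (ih2 : (X + w*Y) + w*Z = X + w*Y) :
    ((1+c)*X + (w+c)*Y) + (w+c)*Z = (1+c)*X + (w+c)*Y := by
  calc ((1+c)*X + (w+c)*Y) + (w+c)*Z
      = ((X + w*Y) + w*Z) + c*((X + Y) + Z) := by
        simp only [sx_add_mul, sx_mul_add, one_mul]; ac_rfl
  _ = (X + w*Y) + c*(X+Y) := by rw [ih1, ih2]
  _ = (1+c)*X + (w+c)*Y := by simp only [sx_add_mul, sx_mul_add, one_mul]; ac_rfl

lemma sx_stepC (w c X Y Z : F)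
    (ih1 : (X + Y) + Z = X + Y) (ih2 : (w*X + Y) + w*Z = w*X + Y) :
    ((w+c)*X + (1+c)*Y) + (w+c)*Z = (w+c)*X + (1+c)*Y := by
  calc ((w+c)*X + (1+c)*Y) + (w+c)*Z
      = ((w*X + Y) + w*Z) + c*((X + Y) + Z) := by
        simp only [sx_add_mul, sx_mul_add, one_mul]; ac_rfl
  _ = (w*X + Y) + c*(X+Y) := by rw [ih1, ih2]
  _ = (w+c)*X + (1+c)*Y := by simp only [sx_add_mul, sx_mul_add, one_mul]; ac_rfl

lemma sx_stepD (w c X Y Z : F)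
    (ih1 : (X + Y) + Z = X + Y) (ih2 : (X + w*Y) + Z = X + w*Y) :
    ((1+c)*X + (w+c)*Y) + (1+c)*Z = (1+c)*X + (w+c)*Y := by
  calc ((1+c)*X + (w+c)*Y) + (1+c)*Z
      = ((X + w*Y) + Z) + c*((X + Y) + Z) := by
        simp only [sx_add_mul, sx_mul_add, one_mul]; ac_rfl
  _ = (X + w*Y) + c*(X+Y) := by rw [ih1, ih2]
  _ = (1+c)*X + (w+c)*Y := by simp only [sx_add_mul, sx_mul_add, one_mul]; ac_rfl

variable (z z' : F) (hzz' : z * z' = 1)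

include hzz' in
lemma sx_FW_base (la lb lc ld : List F)
    (ha : ∀ c ∈ la, c = (1:F)) (hb : ∀ c ∈ lb, c = (1:F))
    (hc : ∀ c ∈ lc, c = (1:F)) (hd : ∀ c ∈ ld, c = (1:F)) :
    (sxPu z la * sxP1 lb * sxPu z' lc * sxP1 ld
      + sxP1 la * sxPu z lb * sxP1 lc * sxPu z' ld)
      + sxP1 la * sxPu z lb * sxPu z' lc * sxP1 ld
    = sxPu z la * sxP1 lb * sxPu z' lc * sxP1 ld
      + sxP1 la * sxPu z lb * sxP1 lc * sxPu z' ld := by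
  rw [sxPu_ones z la ha, sxPu_ones z lb hb, sxPu_ones z' lc hc, sxPu_ones z' ld hd,
    sxP1_ones la ha, sxP1_ones lb hb, sxP1_ones lc hc, sxP1_ones ld hd]
  simp only [one_mul, mul_one]
  exact sx_CORE z z' hzz' la.length lb.length lc.length ld.length

lemma sxCnt_zero_ones {l : List F} (h : sxCnt l = 0) : ∀ c ∈ l, c = (1:F) := by
  intro c hc
  by_contra hne
  classical
  have := List.countP_eq_zero.mp h c hc
  simp [hne] at this

include hzz' in
lemma sx_FW : ∀ (n : ℕ) (la lb lc ld : List F),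
    sxCnt la + sxCnt lb + sxCnt lc + sxCnt ld ≤ n →
    (sxPu z la * sxP1 lb * sxPu z' lc * sxP1 ld
      + sxP1 la * sxPu z lb * sxP1 lc * sxPu z' ld)
      + sxP1 la * sxPu z lb * sxPu z' lc * sxP1 ld
    = sxPu z la * sxP1 lb * sxPu z' lc * sxP1 ld
      + sxP1 la * sxPu z lb * sxP1 lc * sxPu z' ld := by
  intro n
  induction n with
  | zero =>
    intro la lb lc ld hcnt
    exact sx_FW_base z z' hzz' la lb lc ld
      (sxCnt_zero_ones (by omega)) (sxCnt_zero_ones (by omega))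
      (sxCnt_zero_ones (by omega)) (sxCnt_zero_ones (by omega))
  | succ n ih =>
    intro la lb lc ld hcnt
    by_cases Ha : ∀ c ∈ la, c = (1:F)
    · by_cases Hb : ∀ c ∈ lb, c = (1:F)
      · by_cases Hc : ∀ c ∈ lc, c = (1:F)
        · by_cases Hd : ∀ c ∈ ld, c = (1:F)
          · exact sx_FW_base z z' hzz' la lb lc ld Ha Hb Hc Hd
          · -- ld case
            obtain ⟨l₁, c₀, l₂, rfl, hc0⟩ := sx_split ld Hd
            have ec : sxCnt (l₁ ++ c₀ :: l₂) = sxCnt (l₁ ++ l₂) + 1 := by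
              rw [sxCnt_append, sxCnt_append, sxCnt_cons_ne _ hc0]; omega
            have IH1 := ih la lb lc (l₁ ++ l₂) (by omega)
            have IH2 := ih la lb lc ((1:F) :: (l₁ ++ l₂))
              (by rw [sxCnt_cons_one]; omega)
            rw [sxP1_cons_one, sxPu_cons_one] at IH2
            have key := sx_stepD (1+z') c₀
              (sxPu z la * sxP1 lb * sxPu z' lc * sxP1 (l₁ ++ l₂))
              (sxP1 la * sxPu z lb * sxP1 lc * sxPu z' (l₁ ++ l₂))
              (sxP1 la * sxPu z lb * sxPu z' lc * sxP1 (l₁ ++ l₂))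
              IH1
              (by refine Eq.trans (Eq.trans ?_ IH2) ?_ <;> ac_rfl)
            refine Eq.trans (Eq.trans ?_ key) ?_ <;>
              rw [sxP1_extract l₁ l₂ c₀, sxPu_extract z' l₁ l₂ c₀] <;> ac_rfl
        · -- lc case
          obtain ⟨l₁, c₀, l₂, rfl, hc0⟩ := sx_split lc Hc
          have ec : sxCnt (l₁ ++ c₀ :: l₂) = sxCnt (l₁ ++ l₂) + 1 := by
            rw [sxCnt_append, sxCnt_append, sxCnt_cons_ne _ hc0]; omega
          have IH1 := ih la lb (l₁ ++ l₂) ld (by omega)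
          have IH2 := ih la lb ((1:F) :: (l₁ ++ l₂)) ld
            (by rw [sxCnt_cons_one]; omega)
          rw [sxP1_cons_one, sxPu_cons_one] at IH2
          have key := sx_stepC (1+z') c₀
            (sxPu z la * sxP1 lb * sxPu z' (l₁ ++ l₂) * sxP1 ld)
            (sxP1 la * sxPu z lb * sxP1 (l₁ ++ l₂) * sxPu z' ld)
            (sxP1 la * sxPu z lb * sxPu z' (l₁ ++ l₂) * sxP1 ld)
            IH1
            (by refine Eq.trans (Eq.trans ?_ IH2) ?_ <;> ac_rfl)
          refine Eq.trans (Eq.trans ?_ key) ?_ <;>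
            rw [sxP1_extract l₁ l₂ c₀, sxPu_extract z' l₁ l₂ c₀] <;> ac_rfl
      · -- lb case
        obtain ⟨l₁, c₀, l₂, rfl, hc0⟩ := sx_split lb Hb
        have ec : sxCnt (l₁ ++ c₀ :: l₂) = sxCnt (l₁ ++ l₂) + 1 := by
          rw [sxCnt_append, sxCnt_append, sxCnt_cons_ne _ hc0]; omega
        have IH1 := ih la (l₁ ++ l₂) lc ld (by omega)
        have IH2 := ih la ((1:F) :: (l₁ ++ l₂)) lc ld
          (by rw [sxCnt_cons_one]; omega)
        rw [sxP1_cons_one, sxPu_cons_one] at IH2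
        have key := sx_stepB (1+z) c₀
          (sxPu z la * sxP1 (l₁ ++ l₂) * sxPu z' lc * sxP1 ld)
          (sxP1 la * sxPu z (l₁ ++ l₂) * sxP1 lc * sxPu z' ld)
          (sxP1 la * sxPu z (l₁ ++ l₂) * sxPu z' lc * sxP1 ld)
          IH1
          (by refine Eq.trans (Eq.trans ?_ IH2) ?_ <;> ac_rfl)
        refine Eq.trans (Eq.trans ?_ key) ?_ <;>
          rw [sxP1_extract l₁ l₂ c₀, sxPu_extract z l₁ l₂ c₀] <;> ac_rfl
    · -- la case
      obtain ⟨l₁, c₀, l₂, rfl, hc0⟩ := sx_split la Ha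
      have ec : sxCnt (l₁ ++ c₀ :: l₂) = sxCnt (l₁ ++ l₂) + 1 := by
        rw [sxCnt_append, sxCnt_append, sxCnt_cons_ne _ hc0]; omega
      have IH1 := ih (l₁ ++ l₂) lb lc ld (by omega)
      have IH2 := ih ((1:F) :: (l₁ ++ l₂)) lb lc ld
        (by rw [sxCnt_cons_one]; omega)
      rw [sxP1_cons_one, sxPu_cons_one] at IH2
      have key := sx_stepA (1+z) c₀
        (sxPu z (l₁ ++ l₂) * sxP1 lb * sxPu z' lc * sxP1 ld)
        (sxP1 (l₁ ++ l₂) * sxPu z lb * sxP1 lc * sxPu z' ld)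
        (sxP1 (l₁ ++ l₂) * sxPu z lb * sxPu z' lc * sxP1 ld)
        IH1
        (by refine Eq.trans (Eq.trans ?_ IH2) ?_ <;> ac_rfl)
      refine Eq.trans (Eq.trans ?_ key) ?_ <;>
        rw [sxP1_extract l₁ l₂ c₀, sxPu_extract z l₁ l₂ c₀] <;> ac_rfl

end SxFW
section SxGoodSec
variable {F : Type*} [FinfCommAlgebra F]

structure SxGood (M : Set F) : Prop where
  one_mem : (1:F) ∈ M
  ne_zero : ∀ x ∈ M, x ≠ 0
  mul_mem : ∀ x ∈ M, ∀ y ∈ M, x * y ∈ M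
  inv_ex : ∀ x ∈ M, ∃ y ∈ M, x * y = 1
  stab : ∀ x ∈ M, SxStab x
  ratio : ∀ x ∈ M, ∀ c : F, (1:F) + c ≠ 0 → ∃ s ∈ M, x + c = (1 + c) * s

variable (hinv : ∀ x : F, x ≠ 0 → ∃ y : F, x * y = 1)

include hinv in
lemma sx_good_inv_mem {M : Set F} (hM : SxGood M) {x : F} (hx : x ∈ M) :
    sxInv hinv x ∈ M := by
  obtain ⟨y, hy, hxy⟩ := hM.inv_ex x hx
  have hxne : x ≠ 0 := hM.ne_zero x hx
  have : y = sxInv hinv x := by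
    calc y = y * (x * sxInv hinv x) := by rw [sx_mul_inv hinv hxne, mul_one]
    _ = (x * y) * sxInv hinv x := by ac_rfl
    _ = sxInv hinv x := by rw [hxy, one_mul]
  rwa [this] at hy

def SxRel (M : Set F) (x y : F) : Prop := ∃ h ∈ M, x = y * h

variable {M : Set F} (hM : SxGood M)

include hM in
lemma sx_rel_refl (x : F) : SxRel M x x := ⟨1, hM.one_mem, (mul_one x).symm⟩

include hM hinv in
lemma sx_rel_symm {x y : F} (h : SxRel M x y) : SxRel M y x := by
  obtain ⟨h₀, hm, e⟩ := h
  have hne : h₀ ≠ 0 := hM.ne_zero _ hm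
  exact ⟨sxInv hinv h₀, sx_good_inv_mem hinv hM hm, by
    rw [e, mul_assoc, sx_mul_inv hinv hne, mul_one]⟩

include hM in
lemma sx_rel_trans {x y w : F} (h1 : SxRel M x y) (h2 : SxRel M y w) : SxRel M x w := by
  obtain ⟨h₀, hm, e⟩ := h1
  obtain ⟨h₁, hm', e'⟩ := h2
  exact ⟨h₁ * h₀, hM.mul_mem _ hm' _ hm, by rw [e, e', mul_assoc]⟩

lemma sx_rel_mul {x y : F} (c : F) (h : SxRel M x y) : SxRel M (x*c) (y*c) := by
  obtain ⟨h₀, hm, e⟩ := h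
  exact ⟨h₀, hm, by rw [e]; ac_rfl⟩

include hinv in
lemma sx_rel_cancel {x y c : F} (hc : c ≠ 0) (h : SxRel M (x*c) (y*c)) : SxRel M x y := by
  obtain ⟨h₀, hm, e⟩ := h
  refine ⟨h₀, hm, ?_⟩
  have e' : x * c = (y * h₀) * c := by rw [e]; ac_rfl
  exact sx_cancel hinv e' hc

lemma sx_rel_neg {x y : F} (h : SxRel M x y) : SxRel M (-x) (-y) := by
  obtain ⟨h₀, hm, e⟩ := h
  exact ⟨h₀, hm, by rw [e, sx_neg_mul']⟩

include hM in
lemma sx_rel_zero {x : F} : SxRel M x 0 ↔ x = 0 := by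
  constructor
  · rintro ⟨h₀, hm, e⟩; rw [e, sx_zero_mul]
  · rintro rfl; exact ⟨1, hM.one_mem, by rw [sx_zero_mul]⟩

include hM in
lemma sx_rel_one {x : F} : SxRel M x 1 ↔ x ∈ M := by
  constructor
  · rintro ⟨h₀, hm, e⟩; rwa [e, one_mul]
  · intro hx; exact ⟨x, hx, (one_mul x).symm⟩

include hM hinv in
lemma sx_rel_add {x y : F} (c : F) (h : SxRel M x y) : SxRel M (x+c) (y+c) := by
  obtain ⟨h₀, hm, e⟩ := h
  by_cases hy : y = 0
  · subst hy
    rw [sx_zero_mul] at e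
    subst e
    exact sx_rel_refl hM _
  · set e₀ := sxInv hinv y * c with he₀
    have hc : c = y * e₀ := by rw [he₀, ← mul_assoc, sx_mul_inv hinv hy, one_mul]
    have hyc : y + c = y * (1 + e₀) := by rw [sx_mul_add, mul_one, ← hc]
    have hxc : x + c = y * (h₀ + e₀) := by rw [e, sx_mul_add, ← hc]
    by_cases h1e : (1:F) + e₀ = 0
    · have hh : h₀ + e₀ = 0 := (hM.stab _ hm e₀).2 h1e
      rw [hxc, hyc, hh, h1e, sx_mul_zero]
      exact sx_rel_refl hM _
    · obtain ⟨s, hs, es⟩ := hM.ratio _ hm e₀ h1e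
      refine ⟨s, hs, ?_⟩
      rw [hxc, hyc, es]; ac_rfl

/-- element-wise goodness wrt a set K -/
def SxGoodEl (K : Set F) (t : F) : Prop :=
  t ≠ 0 ∧ SxStab t ∧ ∀ c : F, (1:F)+c ≠ 0 → ∃ s ∈ K, t + c = (1+c)*s

include hinv in
lemma sx_goodel_mul {K : Set F} (hKmul : ∀ a ∈ K, ∀ b ∈ K, a*b ∈ K)
    {x y : F} (hx : SxGoodEl K x) (hy : SxGoodEl K y) : SxGoodEl K (x*y) := by
  obtain ⟨hx0, hxs, hxr⟩ := hx
  obtain ⟨hy0, hys, hyr⟩ := hy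
  refine ⟨sx_mul_ne_zero hinv hx0 hy0, sx_stab_mul hinv hx0 hy0 hxs hys, ?_⟩
  intro c h1c
  set e := sxInv hinv x * c with he
  have hc : x * e = c := by rw [he, ← mul_assoc, sx_mul_inv hinv hx0, one_mul]
  have h1e : (1:F) + e ≠ 0 := by
    intro h
    have hxc' : x + c = x * (1+e) := by rw [sx_mul_add, mul_one, hc]
    have : x + c = 0 := by rw [hxc', h, sx_mul_zero]
    exact h1c ((hxs c).1 this)
  obtain ⟨s₁, hs₁, ey⟩ := hyr e h1e
  obtain ⟨s₂, hs₂, ex⟩ := hxr c h1c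
  refine ⟨s₂ * s₁, hKmul _ hs₂ _ hs₁, ?_⟩
  calc x*y + c = x * (y + e) := by rw [sx_mul_add, hc]
  _ = x * ((1+e)*s₁) := by rw [ey]
  _ = (x * (1+e)) * s₁ := by rw [mul_assoc]
  _ = (x + c) * s₁ := by rw [sx_mul_add, mul_one, hc]
  _ = ((1+c)*s₂) * s₁ := by rw [ex]
  _ = (1+c)*(s₂*s₁) := by rw [mul_assoc]

include hinv in
lemma sx_goodel_inv {K : Set F} (hKinv : ∀ a ∈ K, sxInv hinv a ∈ K)
    {x : F} (hx : SxGoodEl K x) (h10 : (1:F) ≠ 0) : SxGoodEl K (sxInv hinv x) := by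
  obtain ⟨hx0, hxs, hxr⟩ := hx
  refine ⟨sx_inv_ne_zero hinv hx0 h10, sx_stab_inv hinv hx0 hxs, ?_⟩
  intro c h1c
  have hfac : x + c * x = x * (1+c) := by rw [sx_mul_add, mul_one, mul_comm x c]
  have h1e : (1:F) + c * x ≠ 0 := by
    intro h
    have h2 : x + c * x = 0 := (hxs (c*x)).2 h
    rw [hfac] at h2
    exact h1c (sx_mul_eq_zero hinv h2 hx0)
  obtain ⟨s, hs, es⟩ := hxr (c*x) h1e
  have hs0 : s ≠ 0 := by
    intro h
    rw [h, sx_mul_zero] at es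
    rw [hfac] at es
    exact h1c (sx_mul_eq_zero hinv es hx0)
  refine ⟨sxInv hinv s, hKinv _ hs, ?_⟩
  have key : (sxInv hinv x + c) * (x * s) = ((1+c) * sxInv hinv s) * (x * s) := by
    calc (sxInv hinv x + c) * (x * s)
        = (sxInv hinv x * x + c * x) * s := by rw [sx_add_mul, sx_add_mul]; ac_rfl
    _ = (1 + c*x) * s := by rw [sx_inv_mul hinv hx0]
    _ = x + c*x := es.symm
    _ = x * (1+c) := hfac
    _ = ((1+c) * sxInv hinv s) * (x * s) := by
          rw [show ((1+c) * sxInv hinv s) * (x * s) = (x*(1+c))*(sxInv hinv s * s) from by ac_rfl,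
            sx_inv_mul hinv hs0, mul_one]
  exact sx_cancel hinv key (sx_mul_ne_zero hinv hx0 hs0)

end SxGoodSec
section SxKSec
variable {F : Type*} [FinfCommAlgebra F]
variable (hinv : ∀ x : F, x ≠ 0 → ∃ y : F, x * y = 1)
variable (h10 : (1:F) ≠ 0)
variable (z : F) (h1z : (1:F) + z ≠ 0)

include hinv in
lemma sx_stab_1c {c : F} (hc : (1:F)+c ≠ 0) : SxStab ((1:F)+c) := by
  intro d
  constructor
  · intro h
    by_contra h1d
    have hexp : ((1:F)+c)*(1+d) = ((1+c)+d) + c*d := by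
      rw [sx_mul_add, mul_one, sx_add_mul, one_mul]; ac_rfl
    rw [h, sx_zero_add] at hexp
    exact sx_mul_ne_zero hinv hc h1d hexp
  · intro h
    calc (1:F)+c+d = (1+d)+c := by ac_rfl
    _ = 0 := by rw [h, sx_zero_add]

include hinv h1z in
lemma sx_stab_uzc {c : F} (hc : (1:F)+c ≠ 0) : SxStab ((1:F)+z+c) := by
  have hE : (1:F)+z+c ≠ 0 := sx_adm z hinv h1z hc
  intro d
  constructor
  · intro h
    by_contra h1d
    have hexp : ((1:F)+z+c)*(1+d) = ((1+z+c)+d) + (z*d + c*d) := by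
      rw [sx_mul_add, mul_one, sx_add_mul, sx_add_mul, one_mul]; ac_rfl
    rw [h, sx_zero_add] at hexp
    exact sx_mul_ne_zero hinv hE h1d hexp
  · intro h
    calc (1:F)+z+c+d = (1+d)+(z+c) := by ac_rfl
    _ = 0 := by rw [h, sx_zero_add]

include hinv h10 h1z in
lemma sx_stab_P1Pu : ∀ l : List F, sxOk l → SxStab (sxP1 l) ∧ SxStab (sxPu z l) := by
  intro l
  induction l with
  | nil => intro _; exact ⟨sx_stab_one, sx_stab_one⟩
  | cons a l ih =>
    intro ok
    have ha : (1:F) + a ≠ 0 := ok a (by simp)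
    have okl : sxOk l := fun c hc => ok c (by simp [hc])
    obtain ⟨ih1, ih2⟩ := ih okl
    constructor
    · rw [sxP1_cons]
      exact sx_stab_mul hinv ha (sxP1_ne_zero hinv h10 l okl) (sx_stab_1c hinv ha) ih1
    · rw [sxPu_cons]
      exact sx_stab_mul hinv (sx_adm z hinv h1z ha) (sxPu_ne_zero z hinv h10 h1z l okl)
        (sx_stab_uzc hinv z h1z ha) ih2

def SxMonW (z : F) (x : F) : Prop := ∃ l : List F, sxOk l ∧ x * sxP1 l = sxPu z l

lemma sx_monw_one : SxMonW z (1:F) :=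
  ⟨[], fun c h => absurd h List.not_mem_nil, by rw [sxP1_nil, sxPu_nil, mul_one]⟩

include hinv h10 h1z in
lemma sx_monw_ne_zero {x : F} (h : SxMonW z x) : x ≠ 0 := by
  obtain ⟨l, ok, e⟩ := h
  intro hx
  rw [hx, sx_zero_mul] at e
  exact sxPu_ne_zero z hinv h10 h1z l ok e.symm

lemma sx_monw_mul {x y : F} (hx : SxMonW z x) (hy : SxMonW z y) : SxMonW z (x*y) := by
  obtain ⟨l, ok, e⟩ := hx
  obtain ⟨l', ok', e'⟩ := hy
  refine ⟨l ++ l', ?_, ?_⟩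
  · intro c hc
    rcases List.mem_append.mp hc with h | h
    · exact ok c h
    · exact ok' c h
  · rw [sxP1_append, sxPu_append, ← e, ← e']; ac_rfl

include hinv h10 h1z in
lemma sx_monw_stab {x : F} (h : SxMonW z x) : SxStab x := by
  obtain ⟨l, ok, e⟩ := h
  obtain ⟨s1, s2⟩ := sx_stab_P1Pu hinv h10 z h1z l ok
  have hP1 : sxP1 l ≠ 0 := sxP1_ne_zero hinv h10 l ok
  have hPu : sxPu z l ≠ 0 := sxPu_ne_zero z hinv h10 h1z l ok
  have hx : x = sxPu z l * sxInv hinv (sxP1 l) := by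
    rw [← e, mul_assoc, sx_mul_inv hinv hP1, mul_one]
  rw [hx]
  exact sx_stab_mul hinv hPu (sx_inv_ne_zero hinv hP1 h10) s2 (sx_stab_inv hinv hP1 s1)

def SxK (M : Set F) (z : F) : Set F :=
  {t | ∃ h x y, h ∈ M ∧ SxMonW z x ∧ SxMonW z y ∧ t * y = h * x}

variable {M : Set F} (hM : SxGood M)

include hM in
lemma sx_K_sub (t : F) (ht : t ∈ M) : t ∈ SxK M z :=
  ⟨t, 1, 1, ht, sx_monw_one z, sx_monw_one z, by rw [mul_one]⟩

include h10 in
lemma sx_monw_u : SxMonW z ((1:F)+z) := by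
  refine ⟨[1], ?_, ?_⟩
  · intro c hc
    simp only [List.mem_singleton] at hc
    subst hc
    rw [sx_one_add_one]; exact h10
  · rw [sxP1_cons, sxP1_nil, sxPu_cons, sxPu_nil, sx_one_add_one, sx_uz1, one_mul]

include hM h10 in
lemma sx_K_u : ((1:F)+z) ∈ SxK M z :=
  ⟨1, (1:F)+z, 1, hM.one_mem, sx_monw_u h10 z, sx_monw_one z, by rw [mul_one, one_mul]⟩

include hM hinv h10 h1z in
lemma sx_K_ne_zero {t : F} (ht : t ∈ SxK M z) : t ≠ 0 := by
  obtain ⟨h, x, y, hm, hx, hy, e⟩ := ht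
  intro h0
  rw [h0, sx_zero_mul] at e
  exact sx_mul_ne_zero hinv (hM.ne_zero h hm)
    (sx_monw_ne_zero hinv h10 z h1z hx) e.symm

include hM in
lemma sx_K_mul {t t' : F} (ht : t ∈ SxK M z) (ht' : t' ∈ SxK M z) :
    t * t' ∈ SxK M z := by
  obtain ⟨h, x, y, hm, hx, hy, e⟩ := ht
  obtain ⟨h', x', y', hm', hx', hy', e'⟩ := ht'
  refine ⟨h*h', x*x', y*y', hM.mul_mem _ hm _ hm', sx_monw_mul z hx hx',
    sx_monw_mul z hy hy', ?_⟩
  have := congrArg₂ (· * ·) e e'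
  calc t*t'*(y*y') = (t*y)*(t'*y') := by ac_rfl
  _ = (h*x)*(h'*x') := this
  _ = h*h'*(x*x') := by ac_rfl

include hM hinv h10 h1z in
lemma sx_K_inv {t : F} (ht : t ∈ SxK M z) : sxInv hinv t ∈ SxK M z := by
  obtain ⟨h, x, y, hm, hx, hy, e⟩ := ht
  have htne : t ≠ 0 := sx_K_ne_zero hinv h10 z h1z hM ⟨h, x, y, hm, hx, hy, e⟩
  have hhne : h ≠ 0 := hM.ne_zero h hm
  refine ⟨sxInv hinv h, y, x, sx_good_inv_mem hinv hM hm, hy, hx, ?_⟩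
  calc sxInv hinv t * x
      = sxInv hinv t * ((sxInv hinv h * h) * x) := by rw [sx_inv_mul hinv hhne, one_mul]
  _ = sxInv hinv t * (sxInv hinv h * (h*x)) := by rw [mul_assoc]
  _ = sxInv hinv t * (sxInv hinv h * (t*y)) := by rw [← e]
  _ = (sxInv hinv t * t) * (sxInv hinv h * y) := by ac_rfl
  _ = sxInv hinv h * y := by rw [sx_inv_mul hinv htne, one_mul]

include hM hinv h10 h1z in
lemma sx_goodel_gen {c₀ : F} (hc₀ : (1:F) + c₀ ≠ 0) :
    SxGoodEl (SxK M z) ((1+z+c₀) * sxInv hinv (1+c₀)) := by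
  have hE : (1:F)+z+c₀ ≠ 0 := sx_adm z hinv h1z hc₀
  have hI : sxInv hinv (1+c₀) ≠ 0 := sx_inv_ne_zero hinv hc₀ h10
  refine ⟨sx_mul_ne_zero hinv hE hI,
    sx_stab_mul hinv hE hI (sx_stab_uzc hinv z h1z hc₀) (sx_stab_inv hinv hc₀ (sx_stab_1c hinv hc₀)), ?_⟩
  intro c h1c
  set w := (1+z+c₀) * sxInv hinv (1+c₀) with hw
  have ew : w * (1+c₀) = 1+z+c₀ := by
    rw [hw, mul_assoc, sx_inv_mul hinv hc₀, mul_one]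
  set c₁ := c₀ + c + c*c₀ with hc₁
  have h1c₁ : (1:F)+c₁ = (1+c₀)*(1+c) := by
    rw [hc₁, sx_mul_add, mul_one, sx_add_mul, one_mul]; ac_rfl
  have h1c₁ne : (1:F)+c₁ ≠ 0 := by rw [h1c₁]; exact sx_mul_ne_zero hinv hc₀ h1c
  set s := (1+z+c₁) * sxInv hinv (1+c₁) with hs
  have hsK : s ∈ SxK M z := by
    refine ⟨1, s, 1, hM.one_mem, ?_, sx_monw_one z, by rw [mul_one, one_mul]⟩
    refine ⟨[c₁], ?_, ?_⟩
    · intro d hd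
      simp only [List.mem_singleton] at hd
      subst hd; exact h1c₁ne
    · rw [sxP1_cons, sxP1_nil, sxPu_cons, sxPu_nil, mul_one, mul_one, hs,
        mul_assoc, sx_inv_mul hinv h1c₁ne, mul_one]
  refine ⟨s, hsK, ?_⟩
  have h2 : (w + c)*(1+c₀) = 1+z+c₁ := by
    rw [sx_add_mul, ew, hc₁]
    rw [sx_mul_add, mul_one]; ac_rfl
  have h3 : ((1+c)*s)*(1+c₀) = 1+z+c₁ := by
    calc ((1+c)*s)*(1+c₀) = s * ((1+c₀)*(1+c)) := by ac_rfl
    _ = s * (1+c₁) := by rw [← h1c₁]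
    _ = 1+z+c₁ := by rw [hs, mul_assoc, sx_inv_mul hinv h1c₁ne, mul_one]
  exact sx_cancel hinv (h2.trans h3.symm) hc₀

include hM hinv h10 h1z in
lemma sx_goodel_monw : ∀ (l : List F), sxOk l → ∀ x : F,
    x * sxP1 l = sxPu z l → SxGoodEl (SxK M z) x := by
  intro l
  induction l with
  | nil =>
    intro _ x e
    rw [sxP1_nil, sxPu_nil, mul_one] at e
    subst e
    exact ⟨h10, sx_stab_one, fun c h1c =>
      ⟨1, sx_K_sub z hM 1 hM.one_mem, by rw [mul_one]⟩⟩
  | cons c₀ l ih =>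
    intro ok x e
    have hc₀ : (1:F) + c₀ ≠ 0 := ok c₀ (by simp)
    have okl : sxOk l := fun c hc => ok c (by simp [hc])
    have hE : (1:F)+z+c₀ ≠ 0 := sx_adm z hinv h1z hc₀
    rw [sxP1_cons, sxPu_cons] at e
    set x' := x * (1+c₀) * sxInv hinv (1+z+c₀) with hx'
    have e' : x' * sxP1 l = sxPu z l := by
      have : x' * sxP1 l = sxInv hinv (1+z+c₀) * (x * ((1+c₀) * sxP1 l)) := by
        rw [hx']; ac_rfl
      rw [this, e, ← mul_assoc, sx_inv_mul hinv hE, one_mul]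
    have hgx' := ih okl x' e'
    have hgw := sx_goodel_gen hinv h10 z h1z hM hc₀
    have hxeq : x = x' * ((1+z+c₀) * sxInv hinv (1+c₀)) := by
      calc x = x * ((1+c₀) * sxInv hinv (1+c₀)) * (sxInv hinv (1+z+c₀) * (1+z+c₀)) := by
            rw [sx_mul_inv hinv hc₀, sx_inv_mul hinv hE, mul_one, mul_one]
      _ = x' * ((1+z+c₀) * sxInv hinv (1+c₀)) := by rw [hx']; ac_rfl
    rw [hxeq]
    exact sx_goodel_mul hinv (fun a ha b hb => sx_K_mul z hM ha hb) hgx' hgw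

include hM hinv h10 h1z in
lemma sx_goodel_K {t : F} (ht : t ∈ SxK M z) : SxGoodEl (SxK M z) t := by
  obtain ⟨h, x, y, hm, hx, hy, e⟩ := ht
  have hyne : y ≠ 0 := sx_monw_ne_zero hinv h10 z h1z hy
  have hKmul : ∀ a ∈ SxK M z, ∀ b ∈ SxK M z, a*b ∈ SxK M z :=
    fun a ha b hb => sx_K_mul z hM ha hb
  have hKinv : ∀ a ∈ SxK M z, sxInv hinv a ∈ SxK M z :=
    fun a ha => sx_K_inv hinv h10 z h1z hM ha
  have hgh : SxGoodEl (SxK M z) h := by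
    refine ⟨hM.ne_zero h hm, hM.stab h hm, ?_⟩
    intro c h1c
    obtain ⟨s, hs, es⟩ := hM.ratio h hm c h1c
    exact ⟨s, sx_K_sub z hM s hs, es⟩
  obtain ⟨lx, okx, ex⟩ := hx
  obtain ⟨ly, oky, ey⟩ := hy
  have hgx : SxGoodEl (SxK M z) x := sx_goodel_monw hinv h10 z h1z hM lx okx x ex
  have hgy : SxGoodEl (SxK M z) y := sx_goodel_monw hinv h10 z h1z hM ly oky y ey
  have hteq : t = h * x * sxInv hinv y := by
    calc t = t * (y * sxInv hinv y) := by rw [sx_mul_inv hinv hyne, mul_one]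
    _ = (t * y) * sxInv hinv y := by rw [mul_assoc]
    _ = h * x * sxInv hinv y := by rw [e]
  rw [hteq]
  exact sx_goodel_mul hinv hKmul (sx_goodel_mul hinv hKmul hgh hgx)
    (sx_goodel_inv hinv hKinv hgy h10)

include hM hinv h10 h1z in
lemma sx_K_good : SxGood (SxK M z) := by
  refine ⟨sx_K_sub z hM 1 hM.one_mem,
    fun t ht => sx_K_ne_zero hinv h10 z h1z hM ht,
    fun a ha b hb => sx_K_mul z hM ha hb,
    fun t ht => ⟨sxInv hinv t, sx_K_inv hinv h10 z h1z hM ht,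
      sx_mul_inv hinv (sx_K_ne_zero hinv h10 z h1z hM ht)⟩,
    fun t ht => (sx_goodel_K hinv h10 z h1z hM ht).2.1,
    fun t ht => (sx_goodel_K hinv h10 z h1z hM ht).2.2⟩

end SxKSec
section SxMain
variable {F : Type*} [FinfCommAlgebra F]
variable (hinv : ∀ x : F, x ≠ 0 → ∃ y : F, x * y = 1)
variable (h10 : (1:F) ≠ 0)

lemma sx_combine (A B C D : F)
    (a1 : (A + B) + D = A + B) (a2 : (A + B) + C = A + B)
    (b1 : (C + D) + B = C + D) (b2 : (C + D) + A = C + D) : A + B = C + D := by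
  calc A + B = ((A+B) + C) + D := by rw [a2, a1]
  _ = ((C+D) + A) + B := by ac_rfl
  _ = C + D := by rw [b2, b1]

variable {M : Set F} (hM : SxGood M)

include hinv hM in
lemma sx_rel_sq {t : F} (ht : t ≠ 0) (h : SxRel M (1 + t*t) t) : SxRel M t 1 := by
  have idl : (1+t*t)+1 = 1+t*t := by
    calc (1+t*t)+1 = (1+1)+t*t := by ac_rfl
    _ = 1+t*t := by rw [sx_one_add_one]
  have e0 := sx_rel_add hinv hM 1 h
  rw [idl] at e0
  have e2 : SxRel M (t+1) t := sx_rel_trans hM (sx_rel_symm hinv hM e0) h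
  have e3 := sx_rel_mul t e2
  have e3' : SxRel M (t + t*t) (t*t) := by
    have h' : (t+1)*t = t + t*t := by rw [sx_add_mul, one_mul]; ac_rfl
    rwa [h'] at e3
  have e4 := sx_rel_add hinv hM (t*t) e3'
  have e4' : SxRel M (1 + (t + t*t)) (1 + t*t) := by
    have := sx_rel_add hinv hM 1 e3'
    have l1 : (t+t*t)+1 = 1+(t+t*t) := by ac_rfl
    have l2 : t*t+1 = 1+t*t := by ac_rfl
    rwa [l1, l2] at this
  have e5 : SxRel M t (1 + (t+t*t)) :=
    sx_rel_trans hM (sx_rel_symm hinv hM h) (sx_rel_symm hinv hM e4')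
  have e6 := sx_rel_add hinv hM (t*t) e2
  have e6' : SxRel M (1 + (t+t*t)) (t + t*t) := by
    have l1 : (t+1)+t*t = 1+(t+t*t) := by ac_rfl
    rwa [l1] at e6
  have e7 : SxRel M t (t*t) :=
    sx_rel_trans hM (sx_rel_trans hM e5 e6') e3'
  have e8 : SxRel M (1*t) (t*t) := by rwa [one_mul]
  exact sx_rel_symm hinv hM (sx_rel_cancel hinv ht e8)

include hinv h10 hM in
lemma sx_Sprop {g : F} (hg : g ∉ M)
    (hmax : ∀ K : Set F, SxGood K → g ∉ K → M ⊆ K → K ⊆ M)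
    {x y : F} (hx : x ≠ 0) (hy : y ≠ 0) (hxy : x + y ≠ 0) :
    SxRel M (x+y) x ∨ SxRel M (x+y) y := by
  by_contra hcon
  push_neg at hcon
  obtain ⟨hnx, hny⟩ := hcon
  set z := sxInv hinv x * y with hzdef
  have hxz : x * z = y := by rw [hzdef, ← mul_assoc, sx_mul_inv hinv hx, one_mul]
  have hzne : z ≠ 0 := by intro h; rw [h, sx_mul_zero] at hxz; exact hy hxz.symm
  have hsum : x * (1+z) = x + y := by rw [sx_mul_add, mul_one, hxz]
  have h1z : (1:F)+z ≠ 0 := by intro h; rw [h, sx_mul_zero] at hsum; exact hxy hsum.symm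
  set z' := sxInv hinv z with hz'def
  have hzz' : z * z' = 1 := sx_mul_inv hinv hzne
  have hz'ne : z' ≠ 0 := sx_inv_ne_zero hinv hzne h10
  have huzz : ((1:F)+z)*z' = 1+z' := by rw [sx_add_mul, one_mul, hzz', add_comm]
  have h1z' : (1:F) + z' ≠ 0 := by
    intro h
    rw [← huzz] at h
    exact sx_mul_ne_zero hinv h1z hz'ne h
  -- the two failing memberships
  have huM : ((1:F)+z) ∉ M := by
    intro hmem
    exact hnx ⟨1+z, hmem, hsum.symm⟩
  have huM' : ((1:F)+z') ∉ M := by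
    intro hmem
    refine hny ⟨1+z', hmem, ?_⟩
    calc x + y = x*(1+z) := hsum.symm
    _ = x*(1+z)*(z*z') := by rw [hzz', mul_one]
    _ = (x*z)*((1+z)*z') := by ac_rfl
    _ = y * ((1+z)*z') := by rw [hxz]
    _ = y * (1+z') := by rw [huzz]
  -- the two good extensions contain g
  have hK1 : SxGood (SxK M z) := sx_K_good hinv h10 z h1z hM
  have hK2 : SxGood (SxK M z') := sx_K_good hinv h10 z' h1z' hM
  have hgK1 : g ∈ SxK M z := by
    by_contra hgK
    exact huM ((hmax _ hK1 hgK (fun t ht => sx_K_sub z hM t ht)) (sx_K_u h10 z hM))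
  have hgK2 : g ∈ SxK M z' := by
    by_contra hgK
    exact huM' ((hmax _ hK2 hgK (fun t ht => sx_K_sub z' hM t ht)) (sx_K_u h10 z' hM))
  obtain ⟨h₁, x₁, y₁, hm₁, hx₁, hy₁, e₁⟩ := hgK1
  obtain ⟨h₂, x₂, y₂, hm₂, hx₂, hy₂, e₂⟩ := hgK2
  obtain ⟨lw, okw, ew⟩ := hx₁
  obtain ⟨lv, okv, ev⟩ := hy₁
  obtain ⟨lw', okw', ew'⟩ := hx₂
  obtain ⟨lv', okv', ev'⟩ := hy₂
  -- master equations
  have E₁ : g * (sxPu z lv * sxP1 lw) = h₁ * (sxPu z lw * sxP1 lv) := by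
    rw [← ew, ← ev]
    calc g * (y₁ * sxP1 lv * sxP1 lw) = (g * y₁) * (sxP1 lv * sxP1 lw) := by ac_rfl
    _ = (h₁ * x₁) * (sxP1 lv * sxP1 lw) := by rw [e₁]
    _ = h₁ * (x₁ * sxP1 lw * sxP1 lv) := by ac_rfl
  have E₂ : g * (sxPu z' lv' * sxP1 lw') = h₂ * (sxPu z' lw' * sxP1 lv') := by
    rw [← ew', ← ev']
    calc g * (y₂ * sxP1 lv' * sxP1 lw') = (g * y₂) * (sxP1 lv' * sxP1 lw') := by ac_rfl
    _ = (h₂ * x₂) * (sxP1 lv' * sxP1 lw') := by rw [e₂]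
    _ = h₂ * (x₂ * sxP1 lw' * sxP1 lv') := by ac_rfl
  -- the four FW instances, combined
  have f1 := sx_FW z z' hzz' (sxCnt lw + sxCnt lv + sxCnt lw' + sxCnt lv') lw lv lw' lv' le_rfl
  have f2 := sx_FW z z' hzz' (sxCnt lw + sxCnt lv + sxCnt lv' + sxCnt lw') lw lv lv' lw' le_rfl
  have f3 := sx_FW z z' hzz' (sxCnt lv + sxCnt lw + sxCnt lv' + sxCnt lw') lv lw lv' lw' le_rfl
  have f4 := sx_FW z z' hzz' (sxCnt lv + sxCnt lw + sxCnt lw' + sxCnt lv') lv lw lw' lv' le_rfl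
  have hLR : (sxPu z lw * sxP1 lv) * (sxPu z' lw' * sxP1 lv')
        + (sxPu z lv * sxP1 lw) * (sxPu z' lv' * sxP1 lw')
      = (sxPu z lw * sxP1 lv) * (sxPu z' lv' * sxP1 lw')
        + (sxPu z lv * sxP1 lw) * (sxPu z' lw' * sxP1 lv') := by
    refine sx_combine _ _ _ _ ?_ ?_ ?_ ?_
    · exact Eq.trans (Eq.trans (by ac_rfl) f1) (by ac_rfl)
    · exact Eq.trans (Eq.trans (by ac_rfl) f3) (by ac_rfl)
    · exact Eq.trans (Eq.trans (by ac_rfl) f2) (by ac_rfl)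
    · exact Eq.trans (Eq.trans (by ac_rfl) f4) (by ac_rfl)
  -- the rel chain
  have hexp : (1 + g*g) * ((sxPu z lv * sxP1 lw) * (sxPu z' lv' * sxP1 lw'))
      = (sxPu z lw * sxP1 lv) * (sxPu z' lw' * sxP1 lv') * (h₁*h₂)
        + (sxPu z lv * sxP1 lw) * (sxPu z' lv' * sxP1 lw') := by
    calc (1 + g*g) * ((sxPu z lv * sxP1 lw) * (sxPu z' lv' * sxP1 lw'))
        = (g * (sxPu z lv * sxP1 lw)) * (g * (sxPu z' lv' * sxP1 lw'))
          + (sxPu z lv * sxP1 lw) * (sxPu z' lv' * sxP1 lw') := by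
          rw [sx_add_mul, one_mul]; ac_rfl
    _ = (h₁ * (sxPu z lw * sxP1 lv)) * (h₂ * (sxPu z' lw' * sxP1 lv'))
          + (sxPu z lv * sxP1 lw) * (sxPu z' lv' * sxP1 lw') := by rw [E₁, E₂]
    _ = _ := by ac_rfl
  have hrel1 : SxRel M
      ((sxPu z lw * sxP1 lv) * (sxPu z' lw' * sxP1 lv') * (h₁*h₂)
        + (sxPu z lv * sxP1 lw) * (sxPu z' lv' * sxP1 lw'))
      ((sxPu z lw * sxP1 lv) * (sxPu z' lw' * sxP1 lv')
        + (sxPu z lv * sxP1 lw) * (sxPu z' lv' * sxP1 lw')) :=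
    sx_rel_add hinv hM _ ⟨h₁*h₂, hM.mul_mem _ hm₁ _ hm₂, rfl⟩
  have hrel2 : SxRel M
      ((1 + g*g) * ((sxPu z lv * sxP1 lw) * (sxPu z' lv' * sxP1 lw')))
      ((sxPu z lw * sxP1 lv) * (sxPu z' lv' * sxP1 lw')
        + (sxPu z lv * sxP1 lw) * (sxPu z' lw' * sxP1 lv')) := by
    rw [hexp]
    rw [hLR] at hrel1
    exact hrel1
  -- relate RHS to g * Q
  have r1 : SxRel M (g * ((sxPu z lv * sxP1 lw) * (sxPu z' lv' * sxP1 lw')))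
      ((sxPu z lw * sxP1 lv) * (sxPu z' lv' * sxP1 lw')) := by
    refine ⟨h₁, hm₁, ?_⟩
    calc g * ((sxPu z lv * sxP1 lw) * (sxPu z' lv' * sxP1 lw'))
        = (g * (sxPu z lv * sxP1 lw)) * (sxPu z' lv' * sxP1 lw') := by ac_rfl
    _ = (h₁ * (sxPu z lw * sxP1 lv)) * (sxPu z' lv' * sxP1 lw') := by rw [E₁]
    _ = _ := by ac_rfl
  have r2 : SxRel M (g * ((sxPu z lv * sxP1 lw) * (sxPu z' lv' * sxP1 lw')))
      ((sxPu z lv * sxP1 lw) * (sxPu z' lw' * sxP1 lv')) := by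
    refine ⟨h₂, hm₂, ?_⟩
    calc g * ((sxPu z lv * sxP1 lw) * (sxPu z' lv' * sxP1 lw'))
        = (g * (sxPu z' lv' * sxP1 lw')) * (sxPu z lv * sxP1 lw) := by ac_rfl
    _ = (h₂ * (sxPu z' lw' * sxP1 lv')) * (sxPu z lv * sxP1 lw) := by rw [E₂]
    _ = _ := by ac_rfl
  have r3 : SxRel M
      ((sxPu z lw * sxP1 lv) * (sxPu z' lv' * sxP1 lw')
        + (sxPu z lv * sxP1 lw) * (sxPu z' lw' * sxP1 lv'))
      (g * ((sxPu z lv * sxP1 lw) * (sxPu z' lv' * sxP1 lw'))) := by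
    have s1 := sx_rel_add hinv hM
      ((sxPu z lv * sxP1 lw) * (sxPu z' lw' * sxP1 lv')) (sx_rel_symm hinv hM r1)
    have s2 := sx_rel_add hinv hM
      (g * ((sxPu z lv * sxP1 lw) * (sxPu z' lv' * sxP1 lw'))) (sx_rel_symm hinv hM r2)
    have l1 : (sxPu z lv * sxP1 lw) * (sxPu z' lw' * sxP1 lv')
        + g * ((sxPu z lv * sxP1 lw) * (sxPu z' lv' * sxP1 lw'))
        = g * ((sxPu z lv * sxP1 lw) * (sxPu z' lv' * sxP1 lw'))
          + (sxPu z lv * sxP1 lw) * (sxPu z' lw' * sxP1 lv') := by ac_rfl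
    have l2 : g * ((sxPu z lv * sxP1 lw) * (sxPu z' lv' * sxP1 lw'))
        + g * ((sxPu z lv * sxP1 lw) * (sxPu z' lv' * sxP1 lw'))
        = g * ((sxPu z lv * sxP1 lw) * (sxPu z' lv' * sxP1 lw')) := sx_idem _
    rw [l1, l2] at s2
    exact sx_rel_trans hM s1 s2
  have final : SxRel M
      ((1 + g*g) * ((sxPu z lv * sxP1 lw) * (sxPu z' lv' * sxP1 lw')))
      (g * ((sxPu z lv * sxP1 lw) * (sxPu z' lv' * sxP1 lw'))) :=
    sx_rel_trans hM hrel2 r3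
  have hQne : (sxPu z lv * sxP1 lw) * (sxPu z' lv' * sxP1 lw') ≠ 0 :=
    sx_mul_ne_zero hinv
      (sx_mul_ne_zero hinv (sxPu_ne_zero z hinv h10 h1z lv okv) (sxP1_ne_zero hinv h10 lw okw))
      (sx_mul_ne_zero hinv (sxPu_ne_zero z' hinv h10 h1z' lv' okv') (sxP1_ne_zero hinv h10 lw' okw'))
  have hfin2 : SxRel M (1 + g*g) g := sx_rel_cancel hinv hQne final
  have hgne : g ≠ 0 := by
    intro h
    rw [h, sx_zero_mul] at E₁
    exact sx_mul_ne_zero hinv (hM.ne_zero _ hm₁)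
      (sx_mul_ne_zero hinv (sxPu_ne_zero z hinv h10 h1z lw okw) (sxP1_ne_zero hinv h10 lv okv))
      E₁.symm
  exact hg ((sx_rel_one hM).mp (sx_rel_sq hinv hM hgne hfin2))

end SxMain
section SxZorn
variable {F : Type*} [FinfCommAlgebra F]
variable (hinv : ∀ x : F, x ≠ 0 → ∃ y : F, x * y = 1)
variable (h10 : (1:F) ≠ 0)

include h10 in
lemma sx_good_singleton : SxGood ({(1:F)} : Set F) := by
  refine ⟨rfl, ?_, ?_, ?_, ?_, ?_⟩
  · intro x hx; rw [Set.mem_singleton_iff] at hx; subst hx; exact h10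
  · intro x hx y hy
    rw [Set.mem_singleton_iff] at hx hy; subst hx; subst hy
    simp [mul_one]
  · intro x hx
    rw [Set.mem_singleton_iff] at hx; subst hx
    exact ⟨1, rfl, mul_one 1⟩
  · intro x hx
    rw [Set.mem_singleton_iff] at hx; subst hx
    exact sx_stab_one
  · intro x hx c h1c
    rw [Set.mem_singleton_iff] at hx; subst hx
    exact ⟨1, rfl, by rw [mul_one, add_comm]⟩

include hinv h10 in
lemma sx_exists {g : F} (hg0 : g ≠ 0) (hg1 : g ≠ 1) :
    ∃ M : Set F, SxGood M ∧ g ∉ M ∧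
      (∀ x y : F, x ≠ 0 → y ≠ 0 → x + y ≠ 0 →
        SxRel M (x+y) x ∨ SxRel M (x+y) y) := by
  set A : Set (Set F) := {S | SxGood S ∧ g ∉ S} with hA
  have hone : ({(1:F)} : Set F) ∈ A := ⟨sx_good_singleton h10, by
    rw [Set.mem_singleton_iff]; exact hg1⟩
  have hchain : ∀ c ⊆ A, IsChain (· ⊆ ·) c → c.Nonempty →
      ∃ ub ∈ A, ∀ s ∈ c, s ⊆ ub := by
    intro c hcA hch hcne
    have hpick : ∀ {S T : Set F}, S ∈ c → T ∈ c → ∀ {x y : F}, x ∈ S → y ∈ T →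
        ∃ U ∈ c, x ∈ U ∧ y ∈ U := by
      intro S T hS hT x y hx hy
      rcases eq_or_ne S T with rfl | hne
      · exact ⟨S, hS, hx, hy⟩
      · rcases hch hS hT hne with h | h
        · exact ⟨T, hT, h hx, hy⟩
        · exact ⟨S, hS, hx, h hy⟩
    refine ⟨⋃₀ c, ⟨⟨?_, ?_, ?_, ?_, ?_, ?_⟩, ?_⟩, fun s hs => Set.subset_sUnion_of_mem hs⟩
    · obtain ⟨S, hS⟩ := hcne
      exact ⟨S, hS, (hcA hS).1.one_mem⟩
    · rintro x ⟨S, hS, hxS⟩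
      exact (hcA hS).1.ne_zero x hxS
    · rintro x ⟨S, hS, hx⟩ y ⟨T, hT, hy⟩
      obtain ⟨U, hU, hxU, hyU⟩ := hpick hS hT hx hy
      exact ⟨U, hU, (hcA hU).1.mul_mem x hxU y hyU⟩
    · rintro x ⟨S, hS, hx⟩
      obtain ⟨y, hy, e⟩ := (hcA hS).1.inv_ex x hx
      exact ⟨y, ⟨S, hS, hy⟩, e⟩
    · rintro x ⟨S, hS, hx⟩
      exact (hcA hS).1.stab x hx
    · rintro x ⟨S, hS, hx⟩ d h1d
      obtain ⟨s, hs, e⟩ := (hcA hS).1.ratio x hx d h1d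
      exact ⟨s, ⟨S, hS, hs⟩, e⟩
    · rintro ⟨S, hS, hgS⟩
      exact (hcA hS).2 hgS
  obtain ⟨Mx, hsubx, hmaxx⟩ := zorn_subset_nonempty A hchain _ hone
  refine ⟨Mx, hmaxx.1.1, hmaxx.1.2, ?_⟩
  intro x y hx hy hxy
  exact sx_Sprop hinv h10 hmaxx.1.1 hmaxx.1.2
    (fun K hK hgK hMK => hmaxx.2 ⟨hK, hgK⟩ hMK) hx hy hxy

end SxZorn

lemma sx_neg_zero {F : Type*} [FinfCommAlgebra F] : -(0:F) = 0 := by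
  have h := FinfModule.add_neg (1:F)
  calc -(0:F) = -(1 + -1) := by rw [h]
  _ = -1 + -(-1) := FinfModule.neg_add 1 (-1)
  _ = -1 + 1 := by rw [FinfModule.neg_neg]
  _ = 1 + -1 := add_comm _ _
  _ = 0 := h

theorem stmt18 {F : Type*} [FinfCommAlgebra F]
    (hF : ∀ a : F, a ≠ 0 → ∃ b : F, a * b = 1)
    (a b : F) (hab : a ≠ b) :
    ∃ P : FinfCong F, FinfPrime P ∧ ¬ P.rel a b := by
  classical
  have h10 : (1:F) ≠ 0 := by
    intro h
    apply hab
    calc a = a * 1 := (mul_one a).symm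
    _ = a * 0 := by rw [h]
    _ = 0 := sx_mul_zero a
    _ = b * 0 := (sx_mul_zero b).symm
    _ = b * 1 := by rw [h]
    _ = b := mul_one b
  have hm1ne0 : (-1:F) ≠ 0 := by
    intro h
    apply h10
    calc (1:F) = -(-1) := (FinfModule.neg_neg 1).symm
    _ = -0 := by rw [h]
    _ = 0 := sx_neg_zero
  have hm1ne1 : (-1:F) ≠ 1 := by
    intro h
    apply h10
    calc (1:F) = 1 + 1 := (sx_one_add_one).symm
    _ = 1 + -1 := by rw [h]
    _ = 0 := FinfModule.add_neg 1
  obtain ⟨g, hg0, hg1, hgab⟩ : ∃ g : F, g ≠ 0 ∧ g ≠ 1 ∧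
      (∀ M : Set F, SxGood M → g ∉ M → ¬ SxRel M a b) := by
    by_cases ha : a = 0
    · have hb : b ≠ 0 := fun h => hab (ha.trans h.symm)
      refine ⟨-1, hm1ne0, hm1ne1, ?_⟩
      rintro M hM hgM ⟨h, hm, e⟩
      rw [ha] at e
      exact sx_mul_ne_zero hF hb (hM.ne_zero h hm) e.symm
    · by_cases hb : b = 0
      · refine ⟨-1, hm1ne0, hm1ne1, ?_⟩
        rintro M hM hgM ⟨h, hm, e⟩
        rw [hb, sx_zero_mul] at e
        exact ha e
      · have hib : sxInv hF b ≠ 0 := sx_inv_ne_zero hF hb h10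
        refine ⟨a * sxInv hF b, sx_mul_ne_zero hF ha hib, ?_, ?_⟩
        · intro h
          apply hab
          calc a = a * (sxInv hF b * b) := by rw [sx_inv_mul hF hb, mul_one]
          _ = (a * sxInv hF b) * b := by rw [mul_assoc]
          _ = 1 * b := by rw [h]
          _ = b := one_mul b
        · rintro M hM hgM ⟨h, hm, e⟩
          apply hgM
          have : a * sxInv hF b = h := by
            rw [e]
            calc b * h * sxInv hF b = h * (b * sxInv hF b) := by ac_rfl
            _ = h := by rw [sx_mul_inv hF hb, mul_one]
          rw [this]
          exact hm
  obtain ⟨M, hM, hgM, hS⟩ := sx_exists hF h10 hg0 hg1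
  refine ⟨⟨⟨SxRel M, sx_rel_refl hM, fun h => sx_rel_symm hF hM h,
    fun h1 h2 => sx_rel_trans hM h1 h2,
    fun c h => sx_rel_add hF hM c h,
    fun h => sx_rel_neg h⟩,
    fun c h => sx_rel_mul c h⟩, ⟨?_, ?_, ?_⟩, ?_⟩
  · exact ⟨1, 0, fun ⟨h, hm, e⟩ => h10 (by rwa [sx_zero_mul] at e)⟩
  · -- prime condition (1)
    intro p q r s hrel
    by_cases h0 : p * r + q * s = 0
    · exact Or.inr (Or.inr (Or.inl ((sx_rel_zero hM).mpr h0)))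
    by_cases h0' : p * s + q * r = 0
    · exact Or.inr (Or.inr (Or.inr ((sx_rel_zero hM).mpr h0')))
    have hp : p ≠ 0 := by rintro rfl; exact h0 (by rw [sx_zero_mul, sx_zero_add])
    have hq : q ≠ 0 := by rintro rfl; exact h0 (by rw [sx_zero_mul, sx_add_zero])
    have hr : r ≠ 0 := by rintro rfl; exact h0 (by rw [sx_mul_zero, sx_zero_add])
    have hs : s ≠ 0 := by rintro rfl; exact h0 (by rw [sx_mul_zero, sx_add_zero])
    have hs1 := hS (p*r) (q*s) (sx_mul_ne_zero hF hp hr) (sx_mul_ne_zero hF hq hs) h0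
    have hs2 := hS (p*s) (q*r) (sx_mul_ne_zero hF hp hs) (sx_mul_ne_zero hF hq hr) h0'
    rcases hs1 with h1 | h1 <;> rcases hs2 with h2 | h2
    · -- pr ~ ps : cancel p, get r ~ s
      have hcmb : SxRel M (p*r) (p*s) :=
        sx_rel_trans hM (sx_rel_trans hM (sx_rel_symm hF hM h1) hrel) h2
      rw [mul_comm p r, mul_comm p s] at hcmb
      exact Or.inr (Or.inl (sx_rel_cancel hF hp hcmb))
    · -- pr ~ qr : cancel r
      have hcmb : SxRel M (p*r) (q*r) :=
        sx_rel_trans hM (sx_rel_trans hM (sx_rel_symm hF hM h1) hrel) h2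
      exact Or.inl (sx_rel_cancel hF hr hcmb)
    · -- qs ~ ps : cancel s
      have hcmb : SxRel M (q*s) (p*s) :=
        sx_rel_trans hM (sx_rel_trans hM (sx_rel_symm hF hM h1) hrel) h2
      exact Or.inl (sx_rel_symm hF hM (sx_rel_cancel hF hs hcmb))
    · -- qs ~ qr : cancel q
      have hcmb : SxRel M (q*s) (q*r) :=
        sx_rel_trans hM (sx_rel_trans hM (sx_rel_symm hF hM h1) hrel) h2
      rw [mul_comm q s, mul_comm q r] at hcmb
      exact Or.inr (Or.inl (sx_rel_symm hF hM (sx_rel_cancel hF hq hcmb)))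
  · -- prime condition (2)
    intro p q r hrel
    by_cases hr : r = 0
    · subst hr; exact Or.inr (sx_rel_refl hM 0)
    · exact Or.inl (sx_rel_cancel hF hr hrel)
  · exact hgab M hM hgM
end
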